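/- arXiv:2511.22526 — 3 statements merged into one kernel-verified Lean document; each statement's English description precedes it below -/
import Mathlib

section
/- Let S be a set of n ≥ 3 points in the plane in convex position, and let a, b, s, t ∈ S be points such that the segments ab and st are disjoint edges of the boundary of the convex hull of S. Then there is no plane (crossing-free) Hamiltonian path on S with endpoints s and t that avoids the segment ab. -/
open Set
open scoped Classical

noncomputable section

/-- Points in the plane. -/
abbrev Pt : Type := ℝ × ℝ

/-- Orientation determinant of the triple `(a, b, p)`:
positive iff `p` lies strictly to the left of the directed line from `a` to `b`. -/
def det3 (a b p : Pt) : ℝ :=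
  (b.1 - a.1) * (p.2 - a.2) - (b.2 - a.2) * (p.1 - a.1)

/-- A finite point set is in general position if no three of its points are collinear. -/
def GenPos (S : Finset Pt) : Prop :=
  ∀ p ∈ S, ∀ q ∈ S, ∀ r ∈ S,
    p ≠ q → p ≠ r → q ≠ r → ¬ Collinear ℝ ({p, q, r} : Set Pt)

/-- The list of (directed) edges of a polygonal path given by its list of vertices. -/
def edgeList (l : List Pt) : List (Pt × Pt) := l.zip l.tail

/-- The segment `ab` is an edge of the path `l`, i.e. `a` and `b` are consecutive on `l`. -/
def IsEdgeOf (a b : Pt) (l : List Pt) : Prop :=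
  (a, b) ∈ edgeList l ∨ (b, a) ∈ edgeList l

/-- `l` is a plane (crossing-free) Hamiltonian path on the point set `S`:
its vertices are exactly the points of `S`, each visited once, and any two distinct
edges intersect only in common endpoints. -/
def PlanePath (S : Finset Pt) (l : List Pt) : Prop :=
  l.Nodup ∧ l.toFinset = S ∧
  ∀ e ∈ edgeList l, ∀ f ∈ edgeList l, e ≠ f →
    segment ℝ e.1 e.2 ∩ segment ℝ f.1 f.2 ⊆
      (({e.1, e.2} : Set Pt) ∩ ({f.1, f.2} : Set Pt))

/-- Two paths are edge-disjoint: no segment is an edge of both. -/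
def EdgeDisjoint (l₁ l₂ : List Pt) : Prop :=
  ∀ x y : Pt, IsEdgeOf x y l₁ → ¬ IsEdgeOf x y l₂

/-- `p` is a vertex of the boundary of the convex hull of `S`. -/
def HullVertex (S : Finset Pt) (p : Pt) : Prop :=
  p ∈ Set.extremePoints ℝ (convexHull ℝ (S : Set Pt))

/-- `ab` is an edge of the boundary of the convex hull of `S`, i.e. `a` and `b` are
consecutive hull vertices: all other points of `S` lie strictly on one side of line `ab`. -/
def IsHullEdge (S : Finset Pt) (a b : Pt) : Prop :=
  a ∈ S ∧ b ∈ S ∧ a ≠ b ∧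
  ((∀ p ∈ S, p ≠ a → p ≠ b → 0 < det3 a b p) ∨
   (∀ p ∈ S, p ≠ a → p ≠ b → det3 a b p < 0))

/-- The segment `xy` is a bridge over the line through `a` and `b`:
it crosses the line `ℓ(ab)` but not the segment `ab`. -/
def IsBridge (a b x y : Pt) : Prop :=
  det3 a b x * det3 a b y < 0 ∧ segment ℝ x y ∩ segment ℝ a b = ∅

/-- The set of common edges of the two paths is exactly the segment `ab`. -/
def SharesExactly (a b : Pt) (l₁ l₂ : List Pt) : Prop :=
  IsEdgeOf a b l₁ ∧ IsEdgeOf a b l₂ ∧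
  ∀ x y : Pt, IsEdgeOf x y l₁ → IsEdgeOf x y l₂ → ({x, y} : Set Pt) = ({a, b} : Set Pt)

/-!
In convex position the first edge `sq` of a plane Hamiltonian path is a hull edge: otherwise
some later edge changes side of the line `sq`, and the crossing point, lying in the hull and on
that line, lies on the segment `sq`. If moreover `st` is a hull edge, deleting `s` leaves a plane
path from `q` to `t` on a set in which `qt` is a hull edge, so we may induct. The induction ends
when `q` is an endpoint of `ab`, say `q = a`: after deleting `s`, the vertex `a` has hull edges
`ab`, `at` and `ar` towards the next vertex `r`, so `r = b` (and `ab` is on the path) or `r = t`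
(and there is no room left for `b`).
-/

lemma div_nonneg_of_mul_nonneg {K : Type*} [Field K] [LinearOrder K] [IsStrictOrderedRing K]
    {a b : K} (h : 0 ≤ a * b) : 0 ≤ a / b := by
  rcases eq_or_ne b 0 with rfl | hb
  · simp
  · rw [show a / b = a * b / (b * b) by field_simp]
    exact div_nonneg h (mul_self_nonneg b)

lemma det3_swap12 (a b c : Pt) : det3 b a c = -det3 a b c := by simp only [det3]; ring
lemma det3_swap23 (a b c : Pt) : det3 a c b = -det3 a b c := by simp only [det3]; ring

lemma det3_add_smul {a b u v : Pt} {x y : ℝ} (hxy : x + y = 1) :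
    det3 a b (x • u + y • v) = x * det3 a b u + y * det3 a b v := by
  simp only [det3, Prod.fst_add, Prod.snd_add, Prod.smul_fst, Prod.smul_snd, smul_eq_mul]
  obtain rfl : y = 1 - x := by linarith
  ring

lemma collinear_of_det3_eq_zero {p q r : Pt} (h : det3 p q r = 0) :
    Collinear ℝ ({p, q, r} : Set Pt) := by
  rcases eq_or_ne p q with rfl | hpq
  · simpa using collinear_pair ℝ p r
  rw [collinear_iff_of_mem (p₀ := p) (by simp)]
  refine ⟨q - p, ?_⟩
  simp only [Set.mem_insert_iff, Set.mem_singleton_iff, forall_eq_or_imp, forall_eq]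
  refine ⟨⟨0, by simp⟩, ⟨1, by simp⟩, ?_⟩
  have hne : q.1 - p.1 ≠ 0 ∨ q.2 - p.2 ≠ 0 := by
    by_contra! h0
    exact hpq (Prod.ext (by linarith [h0.1]) (by linarith [h0.2]))
  simp only [det3] at h
  rcases hne with h1 | h2
  · refine ⟨(r.1 - p.1) / (q.1 - p.1), Prod.ext ?_ ?_⟩ <;>
      simp only [vadd_eq_add, Prod.fst_add, Prod.snd_add, Prod.smul_fst, Prod.smul_snd,
        Prod.fst_sub, Prod.snd_sub, smul_eq_mul] <;> field_simp <;> linarith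
  · refine ⟨(r.2 - p.2) / (q.2 - p.2), Prod.ext ?_ ?_⟩ <;>
      simp only [vadd_eq_add, Prod.fst_add, Prod.snd_add, Prod.smul_fst, Prod.smul_snd,
        Prod.fst_sub, Prod.snd_sub, smul_eq_mul] <;> field_simp <;> linarith

lemma det3_add_det3_add_det3 (s u t p : Pt) :
    det3 u t p + det3 t s p + det3 s u p = det3 s u t := by
  simp only [det3]; ring

lemma det3_barycentric {s u t : Pt} (p : Pt) (h : det3 s u t ≠ 0) :
    (det3 u t p / det3 s u t) • s + (det3 t s p / det3 s u t) • u +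
      (det3 s u p / det3 s u t) • t = p := by
  refine Prod.ext ?_ ?_ <;>
  · simp only [Prod.fst_add, Prod.snd_add, Prod.smul_fst, Prod.smul_snd, smul_eq_mul]
    field_simp
    simp only [det3]
    ring

lemma exists_mem_segment_det3_eq_zero {a b u v : Pt} (h : det3 a b u * det3 a b v < 0) :
    ∃ z ∈ segment ℝ u v, det3 a b z = 0 := by
  set du := det3 a b u
  set dv := det3 a b v
  have hx : 0 ≤ dv / (dv - du) ∧ 0 ≤ du / (du - dv) := by
    rcases lt_or_gt_of_ne (left_ne_zero_of_mul h.ne) with hu | hu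
    · exact ⟨div_nonneg (by nlinarith) (by nlinarith), div_nonneg_of_nonpos hu.le (by nlinarith)⟩
    · exact ⟨div_nonneg_of_nonpos (by nlinarith) (by nlinarith), div_nonneg hu.le (by nlinarith)⟩
  have hne : dv - du ≠ 0 := fun h0 => by
    rw [sub_eq_zero.mp h0] at h
    exact (mul_self_nonneg du).not_gt h
  have hsum : dv / (dv - du) + du / (du - dv) = 1 := by
    rw [← neg_sub dv du, div_neg, ← sub_eq_add_neg, ← sub_div, div_self hne]
  refine ⟨_, ⟨_, _, hx.1, hx.2, hsum, rfl⟩, ?_⟩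
  rw [det3_add_smul hsum, div_mul_eq_mul_div, div_mul_eq_mul_div, ← neg_sub dv du, div_neg,
    ← sub_eq_add_neg, ← sub_div, mul_comm, sub_self, zero_div]

lemma HullVertex.mem_of_mem_convexHull {S : Finset Pt} {T : Set Pt} {p : Pt}
    (hp : HullVertex S p) (hT : T ⊆ S) (h : p ∈ convexHull ℝ T) : p ∈ T :=
  extremePoints_convexHull_subset <|
    inter_extremePoints_subset_extremePoints_of_subset (convexHull_mono hT) ⟨h, hp⟩

lemma HullVertex.eq_or_eq_of_mem_segment {S : Finset Pt} {p y z : Pt} (hp : HullVertex S p)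
    (hy : y ∈ convexHull ℝ (S : Set Pt)) (hz : z ∈ convexHull ℝ (S : Set Pt))
    (h : p ∈ segment ℝ y z) : y = p ∨ z = p :=
  (mem_extremePoints_iff_forall_segment.1 hp).2 y hy z hz h

lemma mem_convexHull_triple {s u t p : Pt} {x y z : ℝ} (hx : 0 ≤ x) (hy : 0 ≤ y) (hz : 0 ≤ z)
    (hxyz : x + y + z = 1) (hp : x • s + y • u + z • t = p) :
    p ∈ convexHull ℝ ({s, u, t} : Set Pt) := by
  have := (convex_convexHull ℝ ({s, u, t} : Set Pt)).sum_mem (t := Finset.univ)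
    (w := ![x, y, z]) (z := ![s, u, t]) (by simp [Fin.forall_fin_succ, hx, hy, hz])
    (by simp [Fin.sum_univ_three, hxyz])
    (fun i _ => by fin_cases i <;> exact subset_convexHull ℝ _ (by simp))
  simpa [Fin.sum_univ_three, hp] using this

def ConvexPosition (S : Finset Pt) : Prop := ∀ p ∈ S, HullVertex S p

lemma isHullEdge_iff {S : Finset Pt} {a b : Pt} :
    IsHullEdge S a b ↔ a ∈ S ∧ b ∈ S ∧ a ≠ b ∧
      ∀ p ∈ S, ∀ q ∈ S, p ≠ a → p ≠ b → q ≠ a → q ≠ b → 0 < det3 a b p * det3 a b q := by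
  refine and_congr_right fun _ => and_congr_right fun _ => and_congr_right fun _ => ⟨?_, ?_⟩
  · rintro (h | h) p hp q hq hpa hpb hqa hqb
    · exact mul_pos (h p hp hpa hpb) (h q hq hqa hqb)
    · exact mul_pos_of_neg_of_neg (h p hp hpa hpb) (h q hq hqa hqb)
  · intro h
    by_cases hpos : ∃ p ∈ S, p ≠ a ∧ p ≠ b ∧ 0 < det3 a b p
    · obtain ⟨p, hp, hpa, hpb, hp0⟩ := hpos
      exact Or.inl fun q hq hqa hqb => (pos_iff_pos_of_mul_pos (h p hp q hq hpa hpb hqa hqb)).1 hp0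
    · push Not at hpos
      refine Or.inr fun q hq hqa hqb => lt_of_le_of_ne (hpos q hq hqa hqb) fun h0 => ?_
      have := h q hq q hq hqa hqb hqa hqb
      rw [h0, mul_zero] at this
      exact lt_irrefl 0 this

lemma IsHullEdge.symm {S : Finset Pt} {a b : Pt} (h : IsHullEdge S a b) : IsHullEdge S b a := by
  rw [isHullEdge_iff] at h ⊢
  obtain ⟨ha, hb, hab, h⟩ := h
  refine ⟨hb, ha, hab.symm, fun p hp q hq hpb hpa hqb hqa => ?_⟩
  rw [det3_swap12 a b p, det3_swap12 a b q, neg_mul_neg]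
  exact h p hp q hq hpa hpb hqa hqb

lemma IsHullEdge.erase {S : Finset Pt} {a b s : Pt} (h : IsHullEdge S a b) (has : a ≠ s)
    (hbs : b ≠ s) : IsHullEdge (S.erase s) a b := by
  obtain ⟨ha, hb, hab, h⟩ := h
  refine ⟨Finset.mem_erase.2 ⟨has, ha⟩, Finset.mem_erase.2 ⟨hbs, hb⟩, hab, ?_⟩
  rcases h with h | h
  · exact Or.inl fun p hp => h p (Finset.mem_of_mem_erase hp)
  · exact Or.inr fun p hp => h p (Finset.mem_of_mem_erase hp)

lemma IsHullEdge.eq_or_eq {S : Finset Pt} {a b r t : Pt} (hab : IsHullEdge S a b)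
    (har : IsHullEdge S a r) (hat : IsHullEdge S a t) (hbt : b ≠ t) : r = b ∨ r = t := by
  by_contra! ⟨hrb, hrt⟩
  rw [isHullEdge_iff] at hab har hat
  obtain ⟨ha, hb, hab, hab'⟩ := hab
  obtain ⟨-, hr, har, har'⟩ := har
  obtain ⟨-, ht, hat, hat'⟩ := hat
  have h1 := hab' r hr t ht har.symm hrb hat.symm hbt.symm
  have h2 := har' b hb t ht hab.symm hrb.symm hat.symm hrt.symm
  have h3 := hat' b hb r hr hab.symm hbt har.symm hrt
  rw [det3_swap23 a b r] at h2
  rw [det3_swap23 a b t, det3_swap23 a r t] at h3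
  nlinarith [mul_pos (mul_pos h1 h2) h3, mul_self_nonneg (det3 a b r * det3 a b t * det3 a r t)]

namespace ConvexPosition

variable {S : Finset Pt} (hS : ConvexPosition S)
include hS

lemma erase (s : Pt) : ConvexPosition (S.erase s) := fun p hp =>
  inter_extremePoints_subset_extremePoints_of_subset
    (convexHull_mono (Finset.coe_subset.2 (S.erase_subset s)))
    ⟨subset_convexHull ℝ _ (Finset.mem_coe.2 hp), hS p (Finset.mem_of_mem_erase hp)⟩

lemma det3_ne_zero {p q r : Pt} (hp : p ∈ S) (hq : q ∈ S) (hr : r ∈ S)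
    (hpq : p ≠ q) (hpr : p ≠ r) (hqr : q ≠ r) : det3 p q r ≠ 0 := by
  have hull : ∀ x ∈ S, x ∈ convexHull ℝ (S : Set Pt) := fun x hx => subset_convexHull ℝ _ hx
  intro h
  rcases (collinear_of_det3_eq_zero h).wbtw_or_wbtw_or_wbtw with h | h | h
  · rcases (hS q hq).eq_or_eq_of_mem_segment (hull p hp) (hull r hr) h.mem_segment with h | h
    exacts [hpq h, hqr h.symm]
  · rcases (hS r hr).eq_or_eq_of_mem_segment (hull q hq) (hull p hp) h.mem_segment with h | h
    exacts [hqr h, hpr h]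
  · rcases (hS p hp).eq_or_eq_of_mem_segment (hull r hr) (hull q hq) h.mem_segment with h | h
    exacts [hpr h.symm, hpq h.symm]

lemma mem_segment_of_det3_eq_zero {p q z : Pt} (hp : p ∈ S) (hq : q ∈ S) (hpq : p ≠ q)
    (hz : z ∈ convexHull ℝ (S : Set Pt)) (h : det3 p q z = 0) : z ∈ segment ℝ p q := by
  have hpS := subset_convexHull ℝ (S : Set Pt) hp
  have hqS := subset_convexHull ℝ (S : Set Pt) hq
  rcases (collinear_of_det3_eq_zero h).wbtw_or_wbtw_or_wbtw with h | h | h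
  · rcases (hS q hq).eq_or_eq_of_mem_segment hpS hz h.mem_segment with h | rfl
    exacts [absurd h hpq, right_mem_segment ℝ p z]
  · exact segment_symm ℝ q p ▸ h.mem_segment
  · rcases (hS p hp).eq_or_eq_of_mem_segment hz hqS h.mem_segment with rfl | h
    exacts [left_mem_segment ℝ z q, absurd h hpq.symm]

/-- A point on the same side of `ut` as `s` would lie in the triangle `sut`. -/
lemma isHullEdge_erase {s u t : Pt} (hsu : IsHullEdge S s u) (hst : IsHullEdge S s t)
    (hut : u ≠ t) : IsHullEdge (S.erase s) u t := by
  rw [isHullEdge_iff] at hsu hst ⊢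
  obtain ⟨hs, hu, hsu, hsu'⟩ := hsu
  obtain ⟨-, ht, hst, hst'⟩ := hst
  have hD : 0 < det3 s u t * det3 s u t := hsu' t ht t ht hst.symm hut.symm hst.symm hut.symm
  have hopp : ∀ p ∈ S, p ≠ s → p ≠ u → p ≠ t → det3 u t p * det3 s u t < 0 := by
    intro p hp hps hpu hpt
    by_contra! h1
    have h2 := hst' p hp u hu hps hpt hsu.symm hut
    have h3 := hsu' p hp t ht hps hpu hst.symm hut.symm
    rw [det3_swap12 t s p, det3_swap23 s u t, neg_mul_neg] at h2
    have hmem : p ∈ convexHull ℝ ({s, u, t} : Set Pt) := by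
      refine mem_convexHull_triple (div_nonneg_of_mul_nonneg h1)
        (div_nonneg_of_mul_nonneg h2.le) (div_nonneg_of_mul_nonneg h3.le) ?_
        (det3_barycentric p (left_ne_zero_of_mul hD.ne'))
      rw [← add_div, ← add_div, det3_add_det3_add_det3, div_self (left_ne_zero_of_mul hD.ne')]
    have := (hS p hp).mem_of_mem_convexHull (by simp [Set.insert_subset_iff, hs, hu, ht]) hmem
    simp [hps, hpu, hpt] at this
  refine ⟨Finset.mem_erase.2 ⟨hsu.symm, hu⟩, Finset.mem_erase.2 ⟨hst.symm, ht⟩, hut, ?_⟩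
  intro p hp q hq hpu hpt hqu hqt
  obtain ⟨hps, hp⟩ := Finset.mem_erase.1 hp
  obtain ⟨hqs, hq⟩ := Finset.mem_erase.1 hq
  nlinarith [mul_pos_of_neg_of_neg (hopp p hp hps hpu hpt) (hopp q hq hqs hqu hqt)]

end ConvexPosition

lemma edgeList_cons_cons (x y : Pt) (L : List Pt) :
    edgeList (x :: y :: L) = (x, y) :: edgeList (y :: L) := rfl

lemma mem_edgeList_cons {e : Pt × Pt} {L : List Pt} (x : Pt) (h : e ∈ edgeList L) :
    e ∈ edgeList (x :: L) := by
  cases L with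
  | nil => simp [edgeList] at h
  | cons y L => exact List.mem_cons_of_mem _ h

lemma mem_of_mem_edgeList {u v : Pt} {L : List Pt} (h : (u, v) ∈ edgeList L) : u ∈ L ∧ v ∈ L :=
  ⟨(List.of_mem_zip h).1, List.mem_of_mem_tail (List.of_mem_zip h).2⟩

lemma IsEdgeOf.symm {a b : Pt} {L : List Pt} (h : IsEdgeOf a b L) : IsEdgeOf b a L := Or.symm h

lemma IsEdgeOf.cons {a b : Pt} {L : List Pt} (x : Pt) (h : IsEdgeOf a b L) :
    IsEdgeOf a b (x :: L) :=
  h.imp (mem_edgeList_cons x) (mem_edgeList_cons x)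

lemma mul_pos_of_forall_edgeList (f : Pt → ℝ) {L : List Pt} (hf : ∀ p ∈ L, f p ≠ 0)
    (he : ∀ e ∈ edgeList L, 0 ≤ f e.1 * f e.2) : ∀ p ∈ L, ∀ q ∈ L, 0 < f p * f q := by
  induction L with
  | nil => simp
  | cons x L ih =>
    have ih := ih (fun p hp => hf p (List.mem_cons_of_mem x hp))
      (fun e he' => he e (mem_edgeList_cons x he'))
    have hx : ∀ q ∈ L, 0 < f x * f q := by
      cases L with
      | nil => simp
      | cons y L =>
        have hxy : 0 < f x * f y := (he (x, y) (by simp [edgeList_cons_cons])).lt_of_ne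
          (mul_ne_zero (hf x (by simp)) (hf y (by simp))).symm
        intro q hq
        nlinarith [mul_pos hxy (ih y (by simp) q hq), mul_self_nonneg (f y)]
    intro p hp q hq
    rcases List.mem_cons.1 hp with rfl | hpL
    · rcases List.mem_cons.1 hq with rfl | hqL
      · exact mul_self_pos.2 (hf _ (by simp))
      · exact hx q hqL
    · rcases List.mem_cons.1 hq with rfl | hqL
      · rw [mul_comm]
        exact hx p hpL
      · exact ih p hpL q hqL

lemma eq_nil_of_getLast?_eq_head {x : Pt} {L : List Pt} (hnd : (x :: L).Nodup)
    (hL : (x :: L).getLast? = some x) : L = [] := by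
  cases L with
  | nil => rfl
  | cons y L =>
    rw [List.getLast?_cons_cons] at hL
    exact absurd (List.mem_of_getLast? hL) (List.nodup_cons.1 hnd).1

namespace PlanePath

variable {S : Finset Pt}

lemma tail {s : Pt} {L : List Pt} (h : PlanePath S (s :: L)) : PlanePath (S.erase s) L := by
  obtain ⟨hnd, hS, hplane⟩ := h
  refine ⟨(List.nodup_cons.1 hnd).2, ?_, fun e he f hf => hplane e (mem_edgeList_cons s he) f
    (mem_edgeList_cons s hf)⟩
  rw [← hS, List.toFinset_cons, Finset.erase_insert (by simpa using (List.nodup_cons.1 hnd).1)]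

lemma mem {L : List Pt} (h : PlanePath S L) {p : Pt} (hp : p ∈ L) : p ∈ S := by
  rw [← h.2.1]
  exact List.mem_toFinset.2 hp

lemma det3_mul_nonneg (hS : ConvexPosition S) {s q : Pt} {L : List Pt}
    (h : PlanePath S (s :: q :: L)) {e : Pt × Pt} (he : e ∈ edgeList L) :
    0 ≤ det3 s q e.1 * det3 s q e.2 := by
  obtain ⟨u, v⟩ := e
  obtain ⟨hu, hv⟩ := mem_of_mem_edgeList he
  have hnd := h.1
  simp only [List.nodup_cons, List.mem_cons, not_or] at hnd
  by_contra! hneg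
  obtain ⟨z, hz, hz0⟩ := exists_mem_segment_det3_eq_zero hneg
  have hzsq : z ∈ segment ℝ s q :=
    hS.mem_segment_of_det3_eq_zero (h.mem (by simp)) (h.mem (by simp)) hnd.1.1
      (segment_subset_convexHull (h.mem (by simp [hu])) (h.mem (by simp [hv])) hz) hz0
  have hcross := h.2.2 (u, v) (mem_edgeList_cons s (mem_edgeList_cons q he)) (s, q)
    (by simp [edgeList_cons_cons]) (fun huv => hnd.1.2 ((Prod.mk.inj huv).1 ▸ hu)) ⟨hz, hzsq⟩
  rcases hcross.1 with rfl | rfl <;> simp [hz0] at hneg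

lemma isHullEdge_first (hS : ConvexPosition S) {s q : Pt} {L : List Pt}
    (h : PlanePath S (s :: q :: L)) : IsHullEdge S s q := by
  have hnd := h.1
  simp only [List.nodup_cons, List.mem_cons, not_or] at hnd
  have hL : ∀ p ∈ S, p ≠ s → p ≠ q → p ∈ L := by
    intro p hp hps hpq
    rw [← h.2.1] at hp
    simpa [hps, hpq] using hp
  have hf : ∀ p ∈ L, det3 s q p ≠ 0 := fun p hp =>
    hS.det3_ne_zero (h.mem (by simp)) (h.mem (by simp)) (h.mem (by simp [hp])) hnd.1.1
      (fun hsp => hnd.1.2 (hsp ▸ hp)) (fun hqp => hnd.2.1 (hqp ▸ hp))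
  rw [isHullEdge_iff]
  refine ⟨h.mem (by simp), h.mem (by simp), hnd.1.1, fun p hp p' hp' hps hpq hp's hp'q => ?_⟩
  exact mul_pos_of_forall_edgeList (det3 s q) hf (fun e he => h.det3_mul_nonneg hS he)
    p (hL p hp hps hpq) p' (hL p' hp' hp's hp'q)

lemma isEdgeOf_of_second_eq (hS : ConvexPosition S) {s a b t : Pt} {L : List Pt}
    (h : PlanePath S (s :: a :: L)) (hlast : (s :: a :: L).getLast? = some t)
    (hst : IsHullEdge S s t) (hab : IsHullEdge S a b) (hat : a ≠ t) (hbs : b ≠ s)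
    (hbt : b ≠ t) : IsEdgeOf a b (s :: a :: L) := by
  have hsa := h.isHullEdge_first hS
  cases L with
  | nil => exact absurd (by simpa using hlast) hat
  | cons r L =>
    have hr := (hab.erase hsa.2.2.1.symm hbs).eq_or_eq (h.tail.isHullEdge_first (hS.erase s))
      (hS.isHullEdge_erase hsa hst hat) hbt
    rcases hr with rfl | rfl
    · exact Or.inl (by simp [edgeList_cons_cons])
    · rw [List.getLast?_cons_cons, List.getLast?_cons_cons] at hlast
      obtain rfl := eq_nil_of_getLast?_eq_head h.tail.tail.1 hlast
      have hb := hab.2.1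
      rw [← h.2.1] at hb
      simp [hbs, hab.2.2.1.symm, hbt] at hb

theorem isEdgeOf_of_isHullEdge (hS : ConvexPosition S) {s a b t : Pt} {L : List Pt}
    (h : PlanePath S (s :: L)) (hlast : (s :: L).getLast? = some t)
    (hst : IsHullEdge S s t) (hab : IsHullEdge S a b)
    (has : a ≠ s) (hat : a ≠ t) (hbs : b ≠ s) (hbt : b ≠ t) : IsEdgeOf a b (s :: L) := by
  induction L generalizing S s with
  | nil => exact absurd (by simpa using hlast) hst.2.2.1
  | cons q L ih =>
    rw [List.getLast?_cons_cons] at hlast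
    by_cases hqt : q = t
    · subst hqt
      obtain rfl := eq_nil_of_getLast?_eq_head h.tail.1 hlast
      have ha := hab.1
      rw [← h.2.1] at ha
      simp [has, hat] at ha
    by_cases hqa : q = a
    · subst hqa
      exact h.isEdgeOf_of_second_eq hS hlast hst hab hat hbs hbt
    by_cases hqb : q = b
    · subst hqb
      exact (h.isEdgeOf_of_second_eq hS hlast hst hab.symm hbt has hat).symm
    exact (ih (hS.erase s) h.tail hlast (hS.isHullEdge_erase (h.isHullEdge_first hS) hst hqt)
      (hab.erase has hbs) (Ne.symm hqa) (Ne.symm hqb)).cons s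

end PlanePath

theorem stmt_0_general (S : Finset Pt)
    (hconv : ∀ p ∈ S, HullVertex S p)
    (a b s t : Pt)
    (hab : IsHullEdge S a b) (hst : IsHullEdge S s t)
    (has : a ≠ s) (hat : a ≠ t) (hbs : b ≠ s) (hbt : b ≠ t) :
    ¬ ∃ l : List Pt, PlanePath S l ∧ l.head? = some s ∧ l.getLast? = some t ∧
      ¬ IsEdgeOf a b l := by
  rintro ⟨_ | ⟨x, l⟩, hpath, hhead, hlast, havoid⟩
  · simp at hhead
  · obtain rfl : x = s := by simpa using hhead
    exact havoid (hpath.isEdgeOf_of_isHullEdge hconv hlast hst hab has hat hbs hbt)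

/-- If `S` is a set of at least 3 points in convex position and `ab`, `st`
are disjoint edges of the convex hull boundary, then there is no plane Hamiltonian path
on `S` with endpoints `s` and `t` avoiding the segment `ab`. -/
theorem stmt_0 (S : Finset Pt) (hcard : 3 ≤ S.card)
    (hconv : ∀ p ∈ S, HullVertex S p)
    (a b s t : Pt)
    (hab : IsHullEdge S a b) (hst : IsHullEdge S s t)
    (has : a ≠ s) (hat : a ≠ t) (hbs : b ≠ s) (hbt : b ≠ t) :
    ¬ ∃ l : List Pt, PlanePath S l ∧ l.head? = some s ∧ l.getLast? = some t ∧
      ¬ IsEdgeOf a b l :=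
  stmt_0_general S hconv a b s t hab hst has hat hbs hbt
end
end

section
/- Let S be a set of n ≥ 4 points in general position in the plane, let a, b ∈ S be distinct, and let s ∈ S be arbitrary. Then there exists a plane Hamiltonian path on S such that one endpoint is s, the other endpoint is a or b, and the segment ab is not an edge of the path. -/
open Set
open scoped Classical

noncomputable section

/-!
Induction on the number of points. If `s` lies inside the convex hull of the other points, visiting
the other points in counterclockwise order around `s`, starting just after `a`, gives a plane path
(a fan) ending at `a`; its last edge is `ab` only if `b` comes last before `a`, and then the fan
ending at `b` works instead, as soon as there is a fourth point. If `s` is a vertex of the hull and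
`u` is a neighbour of `s` on the hull, the edge `su` crosses no segment between the other points,
so `s` can be put in front of a path from `u` through the rest. Taking `u ∈ {a, b}` when possible
leaves the task of a path from `a` to `b` avoiding `ab`, which is again a fan or obtained by
peeling hull vertices; otherwise at least four points remain and induction applies.
-/

open Real

namespace HamPath

def cross (u v : Pt) : ℝ := u.1 * v.2 - u.2 * v.1

def dot (u v : Pt) : ℝ := u.1 * v.1 + u.2 * v.2

section Vectors

variable (u v w : Pt) (c : ℝ)

lemma cross_comm : cross u v = -cross v u := by simp only [cross]; ring

@[simp] lemma cross_self : cross u u = 0 := by simp only [cross]; ring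

@[simp] lemma cross_smul_left : cross (c • u) v = c * cross u v := by
  simp only [cross, Prod.smul_fst, Prod.smul_snd, smul_eq_mul]; ring

@[simp] lemma cross_smul_right : cross u (c • v) = c * cross u v := by
  simp only [cross, Prod.smul_fst, Prod.smul_snd, smul_eq_mul]; ring

@[simp] lemma cross_add_right : cross u (v + w) = cross u v + cross u w := by
  simp only [cross, Prod.fst_add, Prod.snd_add]; ring

@[simp] lemma cross_add_left : cross (u + v) w = cross u w + cross v w := by
  simp only [cross, Prod.fst_add, Prod.snd_add]; ring

@[simp] lemma cross_neg_left : cross (-u) v = -cross u v := by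
  simp only [cross, Prod.fst_neg, Prod.snd_neg]; ring

@[simp] lemma cross_neg_right : cross u (-v) = -cross u v := by
  simp only [cross, Prod.fst_neg, Prod.snd_neg]; ring

@[simp] lemma dot_smul_right : dot u (c • v) = c * dot u v := by
  simp only [dot, Prod.smul_fst, Prod.smul_snd, smul_eq_mul]; ring

@[simp] lemma dot_neg_right : dot u (-v) = -dot u v := by
  simp only [dot, Prod.fst_neg, Prod.snd_neg]; ring

lemma dot_mul_cross_sub (u v w : Pt) :
    dot u v * cross u w - dot u w * cross u v = dot u u * cross v w := by
  simp only [dot, cross]; ring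

lemma smul_add_smul_sub_of_add_eq_one {x y s : Pt} {α β : ℝ} (hαβ : α + β = 1) :
    α • x + β • y - s = α • (x - s) + β • (y - s) := by
  obtain rfl : α = 1 - β := by linarith
  module

variable {u v}

lemma dot_self_pos (hu : u ≠ 0) : 0 < dot u u := by
  obtain ⟨u₁, u₂⟩ := u
  have : u₁ ≠ 0 ∨ u₂ ≠ 0 := by
    by_contra! h
    exact hu (by simp [h.1, h.2])
  simp only [dot]
  rcases this with h | h
  · nlinarith [mul_self_pos.2 h, mul_self_nonneg u₂]
  · nlinarith [mul_self_pos.2 h, mul_self_nonneg u₁]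

lemma exists_eq_smul_of_cross_eq_zero (hu : u ≠ 0) (h : cross u v = 0) : ∃ c : ℝ, v = c • u := by
  refine ⟨dot u v / dot u u, ?_⟩
  have hpos := dot_self_pos hu
  obtain ⟨u₁, u₂⟩ := u
  obtain ⟨v₁, v₂⟩ := v
  simp only [cross, dot] at h hpos ⊢
  ext <;> simp only [Prod.smul_fst, Prod.smul_snd, smul_eq_mul] <;>
    rw [div_mul_eq_mul_div, eq_div_iff hpos.ne']
  · linear_combination (-u₂) * h
  · linear_combination u₁ * h

end Vectors

lemma det3_eq_cross (a b p : Pt) : det3 a b p = cross (b - a) (p - a) := rfl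

lemma det3_swap (a b p : Pt) : det3 b a p = -det3 a b p := by simp only [det3]; ring

lemma det3_rotate (a b p : Pt) : det3 b p a = det3 a b p := by simp only [det3]; ring

lemma det3_self_right (a b : Pt) : det3 a b b = 0 := by simp only [det3]; ring

lemma det3_smul_add_smul (a b p q : Pt) {α β : ℝ} (hαβ : α + β = 1) :
    det3 a b (α • p + β • q) = α * det3 a b p + β * det3 a b q := by
  obtain rfl : β = 1 - α := by linarith
  simp only [det3, Prod.smul_fst, Prod.smul_snd, smul_eq_mul, Prod.fst_add, Prod.snd_add]
  ring

lemma det3_eq_zero_of_mem_segment {p q x : Pt} (hx : x ∈ segment ℝ p q) : det3 p q x = 0 := by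
  obtain ⟨α, β, -, -, hαβ, rfl⟩ := hx
  rw [det3_smul_add_smul p q p q hαβ]
  simp only [det3]; ring

lemma collinear_of_det3_eq_zero {p q r : Pt} (h : det3 p q r = 0) :
    Collinear ℝ ({p, q, r} : Set Pt) := by
  rw [collinear_iff_of_mem (Set.mem_insert p _)]
  by_cases hqp : q - p = 0
  · refine ⟨r - p, ?_⟩
    rintro x (rfl | rfl | rfl)
    · exact ⟨0, by simp⟩
    · exact ⟨0, by rw [sub_eq_zero] at hqp; simp [hqp]⟩
    · exact ⟨1, by simp⟩
  · obtain ⟨c, hc⟩ := exists_eq_smul_of_cross_eq_zero (v := r - p) hqp h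
    refine ⟨q - p, ?_⟩
    rintro x (rfl | rfl | rfl)
    · exact ⟨0, by simp⟩
    · exact ⟨1, by simp⟩
    · exact ⟨c, by rw [← hc]; simp⟩

lemma GenPos.det3_ne_zero {S : Finset Pt} (hS : GenPos S) {p q r : Pt} (hp : p ∈ S) (hq : q ∈ S)
    (hr : r ∈ S) (hpq : p ≠ q) (hpr : p ≠ r) (hqr : q ≠ r) : det3 p q r ≠ 0 :=
  fun h => hS p hp q hq r hr hpq hpr hqr (collinear_of_det3_eq_zero h)

lemma GenPos.subset {S T : Finset Pt} (hS : GenPos S) (hTS : T ⊆ S) : GenPos T :=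
  fun p hp q hq r hr => hS p (hTS hp) q (hTS hq) r (hTS hr)

/-- The counterclockwise angle from `e` to `x`, normalised to `(0, 2π]`: in the open half-planes
left and right of `e` it is an arccotangent of `dot e x / cross e x`. -/
def ccwAngle (e x : Pt) : ℝ :=
  if 0 < cross e x then π / 2 - arctan (dot e x / cross e x)
  else if cross e x < 0 then 3 * π / 2 - arctan (dot e x / cross e x)
  else if 0 < dot e x then 2 * π else π

section Angle

variable {e x y : Pt}

lemma ccwAngle_of_cross_pos (h : 0 < cross e x) :
    ccwAngle e x = π / 2 - arctan (dot e x / cross e x) := by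
  simp [ccwAngle, h]

lemma ccwAngle_of_cross_neg (h : cross e x < 0) :
    ccwAngle e x = 3 * π / 2 - arctan (dot e x / cross e x) := by
  simp [ccwAngle, h, h.not_gt]

lemma ccwAngle_of_cross_eq_zero (h : cross e x = 0) :
    ccwAngle e x = if 0 < dot e x then 2 * π else π := by
  simp [ccwAngle, h]

lemma ccwAngle_mem_Ioo_of_cross_pos (h : 0 < cross e x) : ccwAngle e x ∈ Ioo 0 π := by
  rw [ccwAngle_of_cross_pos h]
  have := arctan_lt_pi_div_two (dot e x / cross e x)
  have := neg_pi_div_two_lt_arctan (dot e x / cross e x)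
  constructor <;> linarith

lemma ccwAngle_mem_Ioo_of_cross_neg (h : cross e x < 0) : ccwAngle e x ∈ Ioo π (2 * π) := by
  rw [ccwAngle_of_cross_neg h]
  have := arctan_lt_pi_div_two (dot e x / cross e x)
  have := neg_pi_div_two_lt_arctan (dot e x / cross e x)
  constructor <;> linarith

lemma ccwAngle_pos_le_two_pi (e x : Pt) : 0 < ccwAngle e x ∧ ccwAngle e x ≤ 2 * π := by
  rcases lt_trichotomy (cross e x) 0 with h | h | h
  · have := ccwAngle_mem_Ioo_of_cross_neg h
    exact ⟨by linarith [this.1, pi_pos], this.2.le⟩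
  · rw [ccwAngle_of_cross_eq_zero h]
    split_ifs <;> constructor <;> linarith [pi_pos]
  · have := ccwAngle_mem_Ioo_of_cross_pos h
    exact ⟨this.1, by linarith [this.2, pi_pos]⟩

lemma ccwAngle_lt_two_pi (h : cross e x ≠ 0) : ccwAngle e x < 2 * π := by
  rcases h.lt_or_gt with h | h
  · exact (ccwAngle_mem_Ioo_of_cross_neg h).2
  · linarith [(ccwAngle_mem_Ioo_of_cross_pos h).2, pi_pos]

lemma ccwAngle_self (he : e ≠ 0) : ccwAngle e e = 2 * π := by
  rw [ccwAngle_of_cross_eq_zero (cross_self e), if_pos (dot_self_pos he)]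

lemma ccwAngle_smul {c : ℝ} (hc : 0 < c) (e x : Pt) : ccwAngle e (c • x) = ccwAngle e x := by
  rcases lt_trichotomy (cross e x) 0 with h | h | h
  · have h' : cross e (c • x) < 0 := by rw [cross_smul_right]; exact mul_neg_of_pos_of_neg hc h
    rw [ccwAngle_of_cross_neg h', ccwAngle_of_cross_neg h, cross_smul_right, dot_smul_right,
      mul_div_mul_left _ _ hc.ne']
  · rw [ccwAngle_of_cross_eq_zero (by rw [cross_smul_right, h, mul_zero]),
      ccwAngle_of_cross_eq_zero h, dot_smul_right]
    simp only [mul_pos_iff_of_pos_left hc]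
  · have h' : 0 < cross e (c • x) := by rw [cross_smul_right]; exact mul_pos hc h
    rw [ccwAngle_of_cross_pos h', ccwAngle_of_cross_pos h, cross_smul_right, dot_smul_right,
      mul_div_mul_left _ _ hc.ne']

lemma ccwAngle_neg (h : cross e x < 0) : ccwAngle e (-x) = ccwAngle e x - π := by
  have h' : 0 < cross e (-x) := by rw [cross_neg_right]; linarith
  rw [ccwAngle_of_cross_pos h', ccwAngle_of_cross_neg h, cross_neg_right, dot_neg_right,
    neg_div_neg_eq]
  ring

private lemma div_lt_div_iff_of_mul_pos {a b c d : ℝ} (h : 0 < c * d) :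
    a / c < b / d ↔ a * d < b * c := by
  have hc : c ≠ 0 := by rintro rfl; simp at h
  have hd : d ≠ 0 := by rintro rfl; simp at h
  have e₁ : a / c * (c * d) = a * d := by field_simp
  have e₂ : b / d * (c * d) = b * c := by field_simp
  rw [← mul_lt_mul_iff_of_pos_right h, e₁, e₂]

lemma ccwAngle_lt_ccwAngle_iff (he : e ≠ 0) (h : 0 < cross e x * cross e y) :
    ccwAngle e x < ccwAngle e y ↔ 0 < cross x y := by
  have key : π / 2 - arctan (dot e x / cross e x) < π / 2 - arctan (dot e y / cross e y) ↔
      0 < cross x y := by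
    rw [sub_lt_sub_iff_left, arctan_lt_arctan_iff, div_lt_div_iff_of_mul_pos (by linarith),
      ← sub_pos, dot_mul_cross_sub, mul_pos_iff_of_pos_left (dot_self_pos he)]
  rcases lt_or_gt_of_ne (show cross e x ≠ 0 by rintro h0; simp [h0] at h) with hx | hx
  · have hy : cross e y < 0 := by nlinarith
    rw [ccwAngle_of_cross_neg hx, ccwAngle_of_cross_neg hy, ← key]
    constructor <;> intro <;> linarith
  · have hy : 0 < cross e y := by nlinarith
    rw [ccwAngle_of_cross_pos hx, ccwAngle_of_cross_pos hy, key]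

lemma cross_eq_zero_of_ccwAngle_eq (he : e ≠ 0) (h : ccwAngle e x = ccwAngle e y) :
    cross x y = 0 := by
  have hx := ccwAngle_mem_Ioo_of_cross_pos (e := e) (x := x)
  have hx' := ccwAngle_mem_Ioo_of_cross_neg (e := e) (x := x)
  have hy := ccwAngle_mem_Ioo_of_cross_pos (e := e) (x := y)
  have hy' := ccwAngle_mem_Ioo_of_cross_neg (e := e) (x := y)
  suffices dot e x * cross e y - dot e y * cross e x = 0 by
    rwa [dot_mul_cross_sub, mul_eq_zero, or_iff_right (dot_self_pos he).ne'] at this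
  rcases lt_trichotomy (cross e x) 0 with hcx | hcx | hcx <;>
  rcases lt_trichotomy (cross e y) 0 with hcy | hcy | hcy
  · rw [ccwAngle_of_cross_neg hcx, ccwAngle_of_cross_neg hcy, sub_right_inj, arctan_inj,
      div_eq_div_iff hcx.ne hcy.ne] at h
    linarith
  · rw [ccwAngle_of_cross_eq_zero hcy] at h
    split_ifs at h <;> linarith [(hx' hcx).1, (hx' hcx).2]
  · linarith [(hx' hcx).1, (hy hcy).2]
  · rw [ccwAngle_of_cross_eq_zero hcx] at h
    split_ifs at h <;> linarith [(hy' hcy).1, (hy' hcy).2]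
  · rw [hcx, hcy]; ring
  · rw [ccwAngle_of_cross_eq_zero hcx] at h
    split_ifs at h <;> linarith [(hy hcy).1, (hy hcy).2, pi_pos]
  · linarith [(hx hcx).2, (hy' hcy).1]
  · rw [ccwAngle_of_cross_eq_zero hcy] at h
    split_ifs at h <;> linarith [(hx hcx).1, (hx hcx).2, pi_pos]
  · rw [ccwAngle_of_cross_pos hcx, ccwAngle_of_cross_pos hcy, sub_right_inj, arctan_inj,
      div_eq_div_iff hcx.ne' hcy.ne'] at h
    linarith

lemma ccwAngle_smul_self (he : e ≠ 0) (c : ℝ) :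
    ccwAngle e (c • e) = if 0 < c then 2 * π else π := by
  rw [ccwAngle_of_cross_eq_zero (by simp), dot_smul_right]
  simp only [mul_pos_iff_of_pos_right (dot_self_pos he)]

lemma cross_pos_of_ccwAngle_sub_lt_pi (he : e ≠ 0) (hx : x ≠ 0) (hy : y ≠ 0)
    (hlt : ccwAngle e x < ccwAngle e y) (hπ : ccwAngle e y - ccwAngle e x < π) :
    0 < cross x y := by
  have hxb := ccwAngle_pos_le_two_pi e x
  have hyb := ccwAngle_pos_le_two_pi e y
  rcases lt_trichotomy (cross e x) 0 with hcx | hcx | hcx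
  · have hx' := ccwAngle_mem_Ioo_of_cross_neg hcx
    rcases lt_trichotomy (cross e y) 0 with hcy | hcy | hcy
    · exact (ccwAngle_lt_ccwAngle_iff he (mul_pos_of_neg_of_neg hcx hcy)).1 hlt
    · obtain ⟨c, rfl⟩ := exists_eq_smul_of_cross_eq_zero he hcy
      rw [ccwAngle_smul_self he] at hlt
      split_ifs at hlt with hc
      · rw [cross_smul_right, cross_comm]; nlinarith
      · linarith [hx'.1]
    · linarith [(ccwAngle_mem_Ioo_of_cross_pos hcy).2, hx'.1]
  · obtain ⟨c, rfl⟩ := exists_eq_smul_of_cross_eq_zero he hcx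
    have hc0 : c ≠ 0 := by rintro rfl; simp at hx
    rw [ccwAngle_smul_self he] at hlt hπ
    split_ifs at hlt hπ with hc
    · linarith
    · rcases lt_trichotomy (cross e y) 0 with hcy | hcy | hcy
      · rw [cross_smul_left]
        exact mul_pos_of_neg_of_neg (lt_of_le_of_ne (not_lt.1 hc) hc0) hcy
      · obtain ⟨d, rfl⟩ := exists_eq_smul_of_cross_eq_zero he hcy
        rw [ccwAngle_smul_self he] at hlt hπ
        split_ifs at hlt hπ <;> linarith
      · linarith [(ccwAngle_mem_Ioo_of_cross_pos hcy).2]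
  · have hx' := ccwAngle_mem_Ioo_of_cross_pos hcx
    rcases lt_trichotomy (cross e y) 0 with hcy | hcy | hcy
    · have hcy' : 0 < cross e (-y) := by rw [cross_neg_right]; linarith
      have := (ccwAngle_lt_ccwAngle_iff he (mul_pos hcy' hcx)).1
        (by rw [ccwAngle_neg hcy]; linarith)
      rwa [cross_neg_left, cross_comm, neg_neg] at this
    · obtain ⟨c, rfl⟩ := exists_eq_smul_of_cross_eq_zero he hcy
      have hc0 : c ≠ 0 := by rintro rfl; simp at hy
      rw [ccwAngle_smul_self he] at hlt hπ
      split_ifs at hlt hπ with hc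
      · linarith [hx'.2]
      · rw [cross_smul_right, cross_comm]
        nlinarith [lt_of_le_of_ne (not_lt.1 hc) hc0]
    · exact (ccwAngle_lt_ccwAngle_iff he (mul_pos hcx hcy)).1 hlt

lemma cross_neg_of_pi_lt_ccwAngle_sub (he : e ≠ 0) (hπ : π < ccwAngle e y - ccwAngle e x) :
    cross x y < 0 := by
  have hxb := ccwAngle_pos_le_two_pi e x
  have hyb := ccwAngle_pos_le_two_pi e y
  have hcx : 0 < cross e x := by
    rcases lt_trichotomy (cross e x) 0 with hcx | hcx | hcx
    · linarith [(ccwAngle_mem_Ioo_of_cross_neg hcx).1]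
    · rw [ccwAngle_of_cross_eq_zero hcx] at hπ
      split_ifs at hπ <;> linarith
    · exact hcx
  rcases lt_trichotomy (cross e y) 0 with hcy | hcy | hcy
  · have hcy' : 0 < cross e (-y) := by rw [cross_neg_right]; linarith
    have := (ccwAngle_lt_ccwAngle_iff he (mul_pos hcx hcy')).1
      (by rw [ccwAngle_neg hcy]; linarith)
    rwa [cross_neg_right, neg_pos] at this
  · obtain ⟨c, rfl⟩ := exists_eq_smul_of_cross_eq_zero he hcy
    rw [ccwAngle_smul_self he] at hπ
    split_ifs at hπ with hc
    · rw [cross_smul_right, cross_comm]; nlinarith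
    · linarith
  · linarith [(ccwAngle_mem_Ioo_of_cross_pos hcx).1, (ccwAngle_mem_Ioo_of_cross_pos hcy).2]

/-- Angles from `y` are angles from `e` shifted by `-ccwAngle e y` modulo `2π`. -/
lemma ccwAngle_lt_ccwAngle_of_lt (he : e ≠ 0) (hy : y ≠ 0) (hex : cross e x ≠ 0)
    (hey : cross e y ≠ 0) (hxy : cross x y ≠ 0) (h : ccwAngle e x < ccwAngle e y) :
    ccwAngle y e < ccwAngle y x := by
  have hye : cross y e = -cross e y := cross_comm y e
  have hyx : cross y x = -cross x y := cross_comm y x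
  rcases hey.lt_or_gt with hey | hey
  · rcases hex.lt_or_gt with hex | hex
    · have := (ccwAngle_lt_ccwAngle_iff he (mul_pos_of_neg_of_neg hex hey)).1 h
      linarith [(ccwAngle_mem_Ioo_of_cross_pos (show 0 < cross y e by linarith)).2,
        (ccwAngle_mem_Ioo_of_cross_neg (show cross y x < 0 by linarith)).1]
    · rcases hxy.lt_or_gt with hxy | hxy
      · exact (ccwAngle_lt_ccwAngle_iff hy (by nlinarith)).2 hex
      · linarith [(ccwAngle_mem_Ioo_of_cross_pos (show 0 < cross y e by linarith)).2,
          (ccwAngle_mem_Ioo_of_cross_neg (show cross y x < 0 by linarith)).1]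
  · have hex : 0 < cross e x := by
      rcases hex.lt_or_gt with hex | hex
      · linarith [(ccwAngle_mem_Ioo_of_cross_neg hex).1, (ccwAngle_mem_Ioo_of_cross_pos hey).2]
      · exact hex
    have := (ccwAngle_lt_ccwAngle_iff he (mul_pos hex hey)).1 h
    exact (ccwAngle_lt_ccwAngle_iff hy (by nlinarith)).2 hex

lemma ccwAngle_smul_add_smul (he : e ≠ 0) {u w : Pt} (huw : 0 < cross u w)
    (hlt : ccwAngle e u < ccwAngle e w) {α β : ℝ} (hα : 0 ≤ α) (hβ : 0 ≤ β) (hαβ : α + β = 1) :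
    ccwAngle e u ≤ ccwAngle e (α • u + β • w) ∧ ccwAngle e (α • u + β • w) ≤ ccwAngle e w ∧
      (ccwAngle e (α • u + β • w) = ccwAngle e u → β = 0) ∧
      (ccwAngle e (α • u + β • w) = ccwAngle e w → α = 0) := by
  set x := α • u + β • w
  have hux : cross u x = β * cross u w := by simp [x]
  have hxw : cross x w = α * cross u w := by simp [x]
  have hu : u ≠ 0 := by rintro rfl; simp [cross] at huw
  have hw : w ≠ 0 := by rintro rfl; simp [cross] at huw
  have hx : x ≠ 0 := by
    intro h0
    rw [h0, show cross u 0 = 0 by simp [cross]] at hux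
    obtain rfl : β = 0 := by nlinarith
    obtain rfl : α = 1 := by linarith
    exact hu (by simpa [x] using h0)
  refine ⟨?_, ?_, fun h => ?_, fun h => ?_⟩
  · by_contra! hxu
    have h₁ : π ≤ ccwAngle e u - ccwAngle e x := by
      by_contra! h₁
      have := cross_pos_of_ccwAngle_sub_lt_pi he hx hu hxu h₁
      rw [cross_comm, hux] at this
      nlinarith
    have := cross_neg_of_pi_lt_ccwAngle_sub he (show π < ccwAngle e w - ccwAngle e x by linarith)
    nlinarith
  · by_contra! hwx
    have h₁ : π ≤ ccwAngle e x - ccwAngle e w := by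
      by_contra! h₁
      have := cross_pos_of_ccwAngle_sub_lt_pi he hw hx hwx h₁
      rw [cross_comm, hxw] at this
      nlinarith
    have := cross_neg_of_pi_lt_ccwAngle_sub he (show π < ccwAngle e x - ccwAngle e u by linarith)
    nlinarith
  · have := cross_eq_zero_of_ccwAngle_eq he h
    rw [cross_comm, hux] at this
    nlinarith
  · have := cross_eq_zero_of_ccwAngle_eq he h
    rw [hxw] at this
    nlinarith

end Angle

section EdgeList

variable {a b x y w : Pt} {l : List Pt}

@[simp] lemma edgeList_nil : edgeList [] = [] := rfl

@[simp] lemma edgeList_singleton (a : Pt) : edgeList [a] = [] := rfl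

@[simp] lemma edgeList_cons_cons (a b : Pt) (l : List Pt) :
    edgeList (a :: b :: l) = (a, b) :: edgeList (b :: l) := rfl

lemma mem_edgeList_cons :
    (x, y) ∈ edgeList (a :: l) ↔ (x = a ∧ l.head? = some y) ∨ (x, y) ∈ edgeList l := by
  cases l with
  | nil => simp
  | cons b l => simp [eq_comm]

lemma mem_of_mem_edgeList (h : (x, y) ∈ edgeList l) : x ∈ l ∧ y ∈ l :=
  ⟨(List.of_mem_zip h).1, List.mem_of_mem_tail (List.of_mem_zip h).2⟩

lemma ne_of_mem_edgeList (hl : l.Nodup) (h : (x, y) ∈ edgeList l) : x ≠ y := by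
  induction l with
  | nil => simp at h
  | cons a l ih =>
    rw [List.nodup_cons] at hl
    rcases mem_edgeList_cons.1 h with ⟨rfl, hy⟩ | h
    · rintro rfl
      exact hl.1 (List.mem_of_mem_head? hy)
    · exact ih hl.2 h

lemma isEdgeOf_comm : IsEdgeOf a b l ↔ IsEdgeOf b a l := or_comm

lemma isEdgeOf_of_isEdgeOf_cons {s : Pt} (ha : a ≠ s) (hb : b ≠ s) (h : IsEdgeOf a b (s :: l)) :
    IsEdgeOf a b l := by
  simp only [IsEdgeOf, mem_edgeList_cons] at h
  tauto

lemma not_isEdgeOf_cons {s t : Pt} (ht : t ∉ l) (hs : l.head? ≠ some s) :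
    ¬ IsEdgeOf t s (t :: l) := by
  rintro (h | h) <;> rcases mem_edgeList_cons.1 h with ⟨h₁, h₂⟩ | h
  · exact hs h₂
  · exact ht (mem_of_mem_edgeList h).1
  · exact ht (List.mem_of_mem_head? h₂)
  · exact ht (mem_of_mem_edgeList h).2

lemma rel_of_mem_edgeList {R : Pt → Pt → Prop} (hl : l.Pairwise R) (h : (x, y) ∈ edgeList l) :
    R x y := by
  induction l with
  | nil => simp at h
  | cons a l ih =>
    rw [List.pairwise_cons] at hl
    rcases mem_edgeList_cons.1 h with ⟨rfl, hy⟩ | h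
    · exact hl.1 y (List.mem_of_mem_head? hy)
    · exact ih hl.2 h

lemma eq_or_eq_or_rel_of_mem_edgeList {R : Pt → Pt → Prop} (hl : l.Pairwise R)
    (h : (x, y) ∈ edgeList l) (hw : w ∈ l) : w = x ∨ w = y ∨ R w x ∨ R y w := by
  induction l with
  | nil => simp at h
  | cons a l ih =>
    rw [List.pairwise_cons] at hl
    rcases mem_edgeList_cons.1 h with ⟨rfl, hy⟩ | h'
    · obtain ⟨l, rfl⟩ := List.head?_eq_some_iff.1 hy
      rw [List.pairwise_cons] at hl
      simp only [List.mem_cons] at hw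
      rcases hw with rfl | rfl | hw
      · exact .inl rfl
      · exact .inr (.inl rfl)
      · exact .inr (.inr (.inr (hl.2.1 w hw)))
    · rcases List.mem_cons.1 hw with rfl | hw
      · exact .inr (.inr (.inl (hl.1 x (mem_of_mem_edgeList h').1)))
      · exact ih hl.2 h' hw

lemma rel_of_isEdgeOf_cons_of_max {R : Pt → Pt → Prop} {s c : Pt} (hl : l.Pairwise R)
    (hmax : ∀ w ∈ l, ¬ R c w) (hsl : s ∉ l) (hcl : c ∈ l) (hhead : l.head? ≠ some c)
    (h : IsEdgeOf x c (s :: l)) : x ∈ l ∧ ∀ w ∈ l, w ≠ x → w ≠ c → R w x := by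
  rcases h with h | h <;> rcases mem_edgeList_cons.1 h with ⟨rfl, hc⟩ | he
  · exact absurd hc hhead
  · refine ⟨(mem_of_mem_edgeList he).1, fun w hw hwx hwc => ?_⟩
    rcases eq_or_eq_or_rel_of_mem_edgeList hl he hw with h | h | h | h
    · exact absurd h hwx
    · exact absurd h hwc
    · exact h
    · exact absurd h (hmax w hw)
  · exact absurd hcl hsl
  · exact absurd (rel_of_mem_edgeList hl he) (hmax x (mem_of_mem_edgeList he).2)

end EdgeList

/-- The third clause of `PlanePath` asks this of any two distinct edges. -/
def MeetAtEnds (e f : Pt × Pt) : Prop :=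
  segment ℝ e.1 e.2 ∩ segment ℝ f.1 f.2 ⊆ ({e.1, e.2} : Set Pt) ∩ {f.1, f.2}

lemma MeetAtEnds.symm {e f : Pt × Pt} (h : MeetAtEnds e f) : MeetAtEnds f e :=
  fun _ hz => (h ⟨hz.2, hz.1⟩).symm

instance : Std.Symm MeetAtEnds := ⟨fun _ _ => MeetAtEnds.symm⟩

lemma planePath_of_pairwise {S : Finset Pt} {l : List Pt} (hnd : l.Nodup) (hS : l.toFinset = S)
    (h : (edgeList l).Pairwise MeetAtEnds) : PlanePath S l :=
  ⟨hnd, hS, fun _ he _ hf hef => h.forall he hf hef⟩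

lemma planePath_pair {s t : Pt} (h : s ≠ t) : PlanePath {s, t} [s, t] :=
  planePath_of_pairwise (by simp [h]) (by simp) (by simp)

lemma meetAtEnds_of_side {S : Finset Pt} {t u x y : Pt} {σ : ℝ}
    (hside : ∀ p ∈ S, p ≠ t → p ≠ u → 0 < σ * det3 t u p)
    (hx : x ∈ S) (hy : y ∈ S) (hxt : x ≠ t) (hyt : y ≠ t) (hxy : x ≠ y) :
    MeetAtEnds (t, u) (x, y) := by
  rintro z ⟨hz₁, hz₂⟩
  have hz : σ * det3 t u z = 0 := by rw [det3_eq_zero_of_mem_segment hz₁, mul_zero]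
  obtain ⟨α, β, hα, hβ, hαβ, rfl⟩ := hz₂
  rw [det3_smul_add_smul t u x y hαβ] at hz
  by_cases hxu : x = u
  · subst hxu
    rw [det3_self_right] at hz
    obtain rfl : β = 0 := (mul_eq_zero.1 (by linear_combination hz :
      β * (σ * det3 t x y) = 0)).resolve_right (hside y hy hyt (Ne.symm hxy)).ne'
    obtain rfl : α = 1 := by linarith
    simp
  by_cases hyu : y = u
  · subst hyu
    rw [det3_self_right] at hz
    obtain rfl : α = 0 := (mul_eq_zero.1 (by linear_combination hz :
      α * (σ * det3 t y x) = 0)).resolve_right (hside x hx hxt hxu).ne'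
    obtain rfl : β = 1 := by linarith
    simp
  have := hside x hx hxt hxu
  have := hside y hy hyt hyu
  rcases hα.eq_or_lt with rfl | hα
  · nlinarith
  · nlinarith

lemma planePath_cons_of_isHullEdge {S : Finset Pt} {P : List Pt} {t u : Pt}
    (hP : PlanePath (S.erase t) P) (hu : P.head? = some u) (htu : IsHullEdge S t u) :
    PlanePath S (t :: P) := by
  obtain ⟨hnd, hfin, hplane⟩ := hP
  obtain ⟨ht, -, -, hside⟩ := htu
  obtain ⟨σ, hσ⟩ : ∃ σ : ℝ, ∀ p ∈ S, p ≠ t → p ≠ u → 0 < σ * det3 t u p := by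
    rcases hside with h | h
    · exact ⟨1, by simpa using h⟩
    · exact ⟨-1, by simpa using h⟩
  have hmem : ∀ {p}, p ∈ P → p ∈ S ∧ p ≠ t := fun hp => by
    have h := List.mem_toFinset.2 hp
    rw [hfin, Finset.mem_erase] at h
    exact h.symm
  have hnew : ∀ f ∈ edgeList P, MeetAtEnds (t, u) f := by
    rintro ⟨x, y⟩ hf
    obtain ⟨hx, hy⟩ := mem_of_mem_edgeList hf
    exact meetAtEnds_of_side hσ (hmem hx).1 (hmem hy).1 (hmem hx).2 (hmem hy).2
      (ne_of_mem_edgeList hnd hf)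
  obtain ⟨P, rfl⟩ := List.head?_eq_some_iff.1 hu
  refine ⟨List.nodup_cons.2 ⟨fun h => (hmem h).2 rfl, hnd⟩, ?_, ?_⟩
  · rw [List.toFinset_cons, hfin, Finset.insert_erase ht]
  · rw [edgeList_cons_cons]
    intro e he f hf hef
    rcases List.mem_cons.1 he with rfl | he <;> rcases List.mem_cons.1 hf with rfl | hf
    · exact absurd rfl hef
    · exact hnew f hf
    · exact (hnew e he).symm
    · exact hplane e he f hf hef

lemma eq_of_mem_convexHull_of_det3_nonpos {T : Finset Pt} {s p : Pt}
    (hs : s ∈ convexHull ℝ (T : Set Pt)) (hle : ∀ w ∈ T, det3 s p w ≤ 0)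
    (hzero : ∀ w ∈ T, det3 s p w = 0 → w = p) : s = p := by
  set K : Set Pt := insert p {x | det3 s p x < 0}
  have hTK : (T : Set Pt) ⊆ K := fun w hw =>
    (hle w hw).eq_or_lt.imp (hzero w hw) id
  have hK : Convex ℝ K := by
    rintro x hx y hy a b ha hb hab
    have hp : det3 s p p = 0 := det3_self_right s p
    simp only [K, Set.mem_insert_iff, Set.mem_ofPred_eq, det3_smul_add_smul s p x y hab] at hx hy ⊢
    rcases hx with rfl | hx <;> rcases hy with rfl | hy
    · exact .inl (Convex.combo_self hab _)
    · rcases hb.eq_or_lt with rfl | hb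
      · obtain rfl : a = 1 := by linarith
        simp
      · right; nlinarith
    · rcases ha.eq_or_lt with rfl | ha
      · obtain rfl : b = 1 := by linarith
        simp
      · right; nlinarith
    · right
      rcases ha.eq_or_lt with rfl | ha <;> nlinarith
  rcases convexHull_min hTK hK hs with h | h
  · exact h
  · simp only [Set.mem_ofPred_eq, det3, sub_self, mul_zero] at h
    exact absurd h (lt_irrefl 0)

/-- `t` is a vertex of the convex hull of `S`, exposed by the line through `t` and `q`. -/
def IsCorner (S : Finset Pt) (t : Pt) : Prop :=
  t ∈ S ∧ ∃ q : Pt, ∀ w ∈ S, w ≠ t → 0 < det3 t q w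

lemma isCorner_of_notMem_convexHull {S : Finset Pt} {t : Pt} (ht : t ∈ S)
    (h : t ∉ convexHull ℝ ((S.erase t : Finset Pt) : Set Pt)) : IsCorner S t := by
  obtain ⟨f, c, hft, hfw⟩ := geometric_hahn_banach_point_closed (convex_convexHull ℝ _)
    ((S.erase t).finite_toSet.isCompact_convexHull (𝕜 := ℝ)).isClosed h
  have hf : ∀ v : Pt, f v = v.1 * f (1, 0) + v.2 * f (0, 1) := fun v => by
    conv_lhs => rw [show v = v.1 • ((1 : ℝ), (0 : ℝ)) + v.2 • ((0 : ℝ), (1 : ℝ)) by ext <;> simp]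
    rw [map_add, map_smul, map_smul, smul_eq_mul, smul_eq_mul]
  refine ⟨ht, t + (f (0, 1), -f (1, 0)), fun w hw hwt => ?_⟩
  have hcw := hfw w (subset_convexHull ℝ _ (by simp [hw, hwt]))
  have := hf (w - t)
  rw [map_sub] at this
  simp only [det3, Prod.fst_add, Prod.snd_add, Prod.fst_sub, Prod.snd_sub] at this ⊢
  linarith

lemma exists_isHullEdge_of_isCorner {S : Finset Pt} {t : Pt} (hS : GenPos S) (ht : IsCorner S t)
    (hcard : 3 ≤ S.card) : ∃ u₁ u₂, u₁ ≠ u₂ ∧ IsHullEdge S t u₁ ∧ IsHullEdge S t u₂ := by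
  obtain ⟨htS, q, hq⟩ := ht
  set T := S.erase t
  have hT : 1 < T.card := by rw [Finset.card_erase_of_mem htS]; omega
  have hqT : ∀ w ∈ T, 0 < cross (q - t) (w - t) := fun w hw =>
    hq w (Finset.mem_of_mem_erase hw) (Finset.ne_of_mem_erase hw)
  have he : q - t ≠ 0 := by
    obtain ⟨w, hw⟩ := Finset.card_pos.1 (by omega : 0 < T.card)
    intro h0
    simpa [h0, cross] using hqT w hw
  set κ := fun w => ccwAngle (q - t) (w - t)
  have hlt : ∀ w ∈ T, ∀ w' ∈ T, κ w ≤ κ w' → w ≠ w' → 0 < det3 t w w' := fun w hw w' hw' hle hne =>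
    (ccwAngle_lt_ccwAngle_iff he (mul_pos (hqT w hw) (hqT w' hw'))).1 <| hle.lt_of_ne fun h =>
      GenPos.det3_ne_zero hS htS (Finset.mem_of_mem_erase hw) (Finset.mem_of_mem_erase hw')
        (Finset.ne_of_mem_erase hw).symm (Finset.ne_of_mem_erase hw').symm hne
        (cross_eq_zero_of_ccwAngle_eq he h)
  obtain ⟨u₁, hu₁, hmax⟩ := T.exists_max_image κ (Finset.card_pos.1 (by omega))
  obtain ⟨u₂, hu₂, hmin⟩ := T.exists_min_image κ (Finset.card_pos.1 (by omega))
  have hmemT : ∀ w ∈ S, w ≠ t → w ∈ T := fun w hw hwt => Finset.mem_erase.2 ⟨hwt, hw⟩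
  refine ⟨u₁, u₂, fun h => ?_, ⟨htS, Finset.mem_of_mem_erase hu₁,
    (Finset.ne_of_mem_erase hu₁).symm, .inr fun w hw hwt hwu => ?_⟩,
    ⟨htS, Finset.mem_of_mem_erase hu₂, (Finset.ne_of_mem_erase hu₂).symm,
      .inl fun w hw hwt hwu => hlt _ hu₂ _ (hmemT w hw hwt) (hmin w (hmemT w hw hwt)) hwu.symm⟩⟩
  · obtain ⟨w, hw, hwu⟩ := Finset.exists_mem_ne hT u₁
    have h₁ := hlt w hw u₁ hu₁ (hmax w hw) hwu
    have h₂ := hlt u₂ hu₂ w hw (hmin w hw) (h ▸ hwu.symm)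
    rw [← h, det3_eq_cross, cross_comm] at h₂
    rw [det3_eq_cross] at h₁
    linarith
  · have := hlt w (hmemT w hw hwt) u₁ hu₁ (hmax w (hmemT w hw hwt)) hwu
    rw [det3_eq_cross, cross_comm] at this
    rw [det3_eq_cross]
    linarith

lemma isCorner_erase_of_isHullEdge {S : Finset Pt} {t u : Pt} (h : IsHullEdge S t u) :
    IsCorner (S.erase t) u := by
  obtain ⟨-, hu, htu, hside⟩ := h
  refine ⟨Finset.mem_erase.2 ⟨htu.symm, hu⟩, ?_⟩
  rcases hside with hside | hside
  · refine ⟨u + u - t, fun w hw hwu => ?_⟩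
    have := hside w (Finset.mem_of_mem_erase hw) (Finset.ne_of_mem_erase hw) hwu
    simp only [det3, Prod.fst_add, Prod.snd_add, Prod.fst_sub, Prod.snd_sub] at this ⊢
    linarith
  · refine ⟨t, fun w hw hwu => ?_⟩
    have := hside w (Finset.mem_of_mem_erase hw) (Finset.ne_of_mem_erase hw) hwu
    rw [det3_swap]
    linarith

lemma exists_planePath_from_corner (S : Finset Pt) {t s : Pt} (hS : GenPos S) (ht : IsCorner S t)
    (hs : s ∈ S) (hst : s ≠ t) :
    ∃ l : List Pt, PlanePath S l ∧ l.head? = some t ∧ l.getLast? = some s ∧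
      (2 < S.card → ¬ IsEdgeOf t s l) := by
  induction S using Finset.strongInduction generalizing t with
  | H S ih =>
  by_cases hcard : S.card ≤ 2
  · have hpair : S = {t, s} := (Finset.eq_of_subset_of_card_le
      (Finset.insert_subset ht.1 (Finset.singleton_subset_iff.2 hs))
      (hcard.trans (Finset.card_pair hst.symm).ge)).symm
    exact ⟨[t, s], hpair ▸ planePath_pair hst.symm, rfl, rfl, by omega⟩
  obtain ⟨u₁, u₂, hu₁₂, hu₁, hu₂⟩ := exists_isHullEdge_of_isCorner hS ht (by omega)
  obtain ⟨u, hu, hus⟩ : ∃ u, IsHullEdge S t u ∧ u ≠ s := by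
    by_cases h : u₁ = s
    · exact ⟨u₂, hu₂, h ▸ hu₁₂.symm⟩
    · exact ⟨u₁, hu₁, h⟩
  obtain ⟨l, hl, hhead, hlast, -⟩ := ih (S.erase t) (Finset.erase_ssubset ht.1)
    (GenPos.subset hS (Finset.erase_subset t S)) (isCorner_erase_of_isHullEdge hu)
    (Finset.mem_erase.2 ⟨hst, hs⟩) hus.symm
  have htl : t ∉ l := fun h => by
    have := List.mem_toFinset.2 h
    rw [hl.2.1] at this
    simp at this
  refine ⟨t :: l, planePath_cons_of_isHullEdge hl hhead hu, rfl, ?_, fun _ => ?_⟩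
  · simp [List.getLast?_cons, hlast]
  · exact not_isEdgeOf_cons htl (by rw [hhead]; simpa using hus)

lemma exists_list_pairwise_lt {α : Type*} [DecidableEq α] (T : Finset α) (f : α → ℝ)
    (hf : Set.InjOn f T) :
    ∃ L : List α, L.toFinset = T ∧ L.Pairwise (fun p q => f p < f q) := by
  set L := T.toList.mergeSort (fun p q => decide (f p ≤ f q))
  have hperm : L.Perm T.toList := List.mergeSort_perm _ _
  have hmem : ∀ {p}, p ∈ L ↔ p ∈ T := by simp [hperm.mem_iff]
  have hle := List.pairwise_mergeSort (le := fun p q => decide (f p ≤ f q))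
    (fun _ _ _ h₁ h₂ => by simp only [decide_eq_true_eq] at *; linarith)
    (fun a b => by simpa using le_total (f a) (f b)) T.toList
  refine ⟨L, by ext; simp [hmem], ((hle.and (hperm.nodup_iff.2 T.nodup_toList)).imp_of_mem ?_)⟩
  intro p q hp hq ⟨hpq, hne⟩
  simp only [decide_eq_true_eq] at hpq
  exact hpq.lt_of_ne fun h => hne (hf (hmem.1 hp) (hmem.1 hq) h)

section Fan

variable {e s : Pt}

lemma ccwAngle_sub_of_mem_segment (he : e ≠ 0) {x y z : Pt} (hturn : 0 < det3 s x y)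
    (hlt : ccwAngle e (x - s) < ccwAngle e (y - s)) (hz : z ∈ segment ℝ x y) :
    ccwAngle e (x - s) ≤ ccwAngle e (z - s) ∧ ccwAngle e (z - s) ≤ ccwAngle e (y - s) ∧
      (ccwAngle e (z - s) = ccwAngle e (x - s) → z = x) ∧
      (ccwAngle e (z - s) = ccwAngle e (y - s) → z = y) := by
  obtain ⟨α, β, hα, hβ, hαβ, rfl⟩ := hz
  obtain ⟨h₁, h₂, h₃, h₄⟩ := ccwAngle_smul_add_smul (u := x - s) (w := y - s) he hturn hlt hα hβ hαβ
  rw [smul_add_smul_sub_of_add_eq_one hαβ]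
  refine ⟨h₁, h₂, fun h => ?_, fun h => ?_⟩
  · obtain rfl := h₃ h
    obtain rfl : α = 1 := by linarith
    simp
  · obtain rfl := h₄ h
    obtain rfl : β = 1 := by linarith
    simp

lemma eq_of_mem_segment_of_ccwAngle_le (he : e ≠ 0) {x y z q : Pt} (hturn : 0 < det3 s x y)
    (hlt : ccwAngle e (x - s) < ccwAngle e (y - s)) (hz : z ∈ segment ℝ x y)
    (hqx : x = q ∨ ccwAngle e (q - s) < ccwAngle e (x - s))
    (hzq : ccwAngle e (z - s) ≤ ccwAngle e (q - s)) : z = q ∧ x = q := by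
  obtain ⟨h₁, -, h₃, -⟩ := ccwAngle_sub_of_mem_segment he hturn hlt hz
  rcases hqx with rfl | hqx
  · exact ⟨h₃ (le_antisymm hzq h₁), rfl⟩
  · linarith

lemma pairwise_meetAtEnds_of_sorted (he : e ≠ 0) {L : List Pt}
    (hsorted : L.Pairwise (fun p q => ccwAngle e (p - s) < ccwAngle e (q - s)))
    (hturn : ∀ x y, (x, y) ∈ edgeList L → 0 < det3 s x y) :
    (edgeList L).Pairwise MeetAtEnds := by
  induction L with
  | nil => simp
  | cons p L ih =>
    cases L with
    | nil => simp
    | cons q L =>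
      rw [edgeList_cons_cons, List.pairwise_cons]
      have hpq := hturn p q (by simp)
      refine ⟨fun ⟨x, y⟩ hxy z ⟨hz₁, hz₂⟩ => ?_,
        ih hsorted.of_cons fun x y h => hturn x y (List.mem_cons_of_mem _ h)⟩
      obtain ⟨-, hzq, -, -⟩ := ccwAngle_sub_of_mem_segment he hpq
        (List.rel_of_pairwise_cons hsorted (by simp)) hz₁
      have hqx : x = q ∨ ccwAngle e (q - s) < ccwAngle e (x - s) := by
        rcases List.mem_cons.1 (mem_of_mem_edgeList hxy).1 with h | h
        · exact .inl h
        · exact .inr (List.rel_of_pairwise_cons hsorted.of_cons h)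
      obtain ⟨rfl, rfl⟩ := eq_of_mem_segment_of_ccwAngle_le he
        (hturn _ _ (List.mem_cons_of_mem _ hxy))
        (rel_of_mem_edgeList hsorted.of_cons hxy) hz₂ hqx hzq
      simp

/-- Seen from `s`, the edges sweep consecutive intervals of angles. -/
lemma planePath_cons_of_sorted (he : e ≠ 0) {L : List Pt} (hsL : s ∉ L)
    (hsorted : L.Pairwise (fun p q => ccwAngle e (p - s) < ccwAngle e (q - s)))
    (hturn : ∀ x y, (x, y) ∈ edgeList L → 0 < det3 s x y) :
    PlanePath (insert s L.toFinset) (s :: L) := by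
  refine planePath_of_pairwise (List.nodup_cons.2
    ⟨hsL, hsorted.imp fun h => ne_of_apply_ne (fun p => ccwAngle e (p - s)) h.ne⟩)
    List.toFinset_cons ?_
  cases L with
  | nil => simp
  | cons p L =>
    rw [edgeList_cons_cons, List.pairwise_cons]
    refine ⟨fun ⟨x, y⟩ hxy z ⟨hz₁, hz₂⟩ => ?_, pairwise_meetAtEnds_of_sorted he hsorted hturn⟩
    have hsxy : s ∉ segment ℝ x y := fun h => (hturn x y hxy).ne'
      (by rw [← det3_rotate]; exact det3_eq_zero_of_mem_segment h)
    obtain ⟨α, β, hα, hβ, hαβ, rfl⟩ := hz₁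
    have hβ : 0 < β := by
      refine hβ.lt_of_ne fun hβ0 => hsxy ?_
      obtain rfl : α = 1 := by linarith
      simpa [← hβ0] using hz₂
    have hzp : ccwAngle e (α • s + β • p - s) = ccwAngle e (p - s) := by
      rw [smul_add_smul_sub_of_add_eq_one hαβ, sub_self, smul_zero, zero_add, ccwAngle_smul hβ]
    have hpx : x = p ∨ ccwAngle e (p - s) < ccwAngle e (x - s) := by
      rcases List.mem_cons.1 (mem_of_mem_edgeList hxy).1 with h | h
      · exact .inl h
      · exact .inr (List.rel_of_pairwise_cons hsorted h)
    obtain ⟨hz, rfl⟩ := eq_of_mem_segment_of_ccwAngle_le he (hturn x y hxy)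
      (rel_of_mem_edgeList hsorted hxy) hz₂ hpx hzp.le
    simp [hz]

/-- Otherwise the line through `s` and `x` would leave all points of `L` on one side. -/
lemma det3_pos_of_mem_convexHull (he : e ≠ 0) {L : List Pt}
    (hsL : s ∉ L) (hsorted : L.Pairwise (fun p q => ccwAngle e (p - s) < ccwAngle e (q - s)))
    (hgen : ∀ p ∈ L, ∀ q ∈ L, p ≠ q → det3 s p q ≠ 0)
    (hint : s ∈ convexHull ℝ (L.toFinset : Set Pt)) {x y : Pt} (hxy : (x, y) ∈ edgeList L) :
    0 < det3 s x y := by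
  obtain ⟨hx, hy⟩ := mem_of_mem_edgeList hxy
  have hne : ∀ {p}, p ∈ L → p - s ≠ 0 := fun hp h => hsL (sub_eq_zero.1 h ▸ hp)
  have hlt := rel_of_mem_edgeList hsorted hxy
  by_contra! hneg
  have hneg : det3 s x y < 0 := hneg.lt_of_ne (hgen x hx y hy (ne_of_mem_edgeList
    (hsorted.imp fun h => ne_of_apply_ne (fun p => ccwAngle e (p - s)) h.ne) hxy))
  have hπ : π ≤ ccwAngle e (y - s) - ccwAngle e (x - s) := by
    by_contra! h
    exact hneg.not_gt (cross_pos_of_ccwAngle_sub_lt_pi he (hne hx) (hne hy) hlt h)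
  have hside : ∀ w ∈ L, w ≠ x → det3 s x w < 0 := fun w hw hwx => by
    have hwb := ccwAngle_pos_le_two_pi e (w - s)
    have hyb := ccwAngle_pos_le_two_pi e (y - s)
    rcases eq_or_eq_or_rel_of_mem_edgeList hsorted hxy hw with rfl | rfl | hwx' | hyw
    · exact absurd rfl hwx
    · exact hneg
    · have := cross_pos_of_ccwAngle_sub_lt_pi he (hne hw) (hne hx) hwx' (by linarith)
      rw [det3_eq_cross, cross_comm]
      linarith
    · exact cross_neg_of_pi_lt_ccwAngle_sub (x := x - s) (y := w - s) he (by linarith)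
  refine hsL (eq_of_mem_convexHull_of_det3_nonpos hint (fun w hw => ?_) (fun w hw h => ?_) ▸ hx)
  · rw [List.mem_toFinset] at hw
    rcases eq_or_ne w x with rfl | hwx
    · rw [det3_eq_cross, cross_self]
    · exact (hside w hw hwx).le
  · rw [List.mem_toFinset] at hw
    by_contra hwx
    exact (hside w hw hwx).ne h

end Fan

/-- The fan: from `s`, visit the other points in counterclockwise order around `s`, ending
at `c`. -/
lemma exists_fan {S : Finset Pt} {s c : Pt} (hS : GenPos S) (hs : s ∈ S) (hc : c ∈ S)
    (hcs : c ≠ s) (hcard : 3 ≤ S.card)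
    (hint : s ∈ convexHull ℝ ((S.erase s : Finset Pt) : Set Pt)) :
    ∃ l : List Pt, PlanePath S l ∧ l.head? = some s ∧ l.getLast? = some c ∧
      ∀ x, IsEdgeOf x c l → x ≠ s ∧ ∀ w ∈ S, w ≠ s → w ≠ c → w ≠ x →
        ccwAngle (c - s) (w - s) < ccwAngle (c - s) (x - s) := by
  have he : c - s ≠ 0 := sub_ne_zero.2 hcs
  set κ := fun p => ccwAngle (c - s) (p - s)
  set T := (S.erase s).erase c
  have hgen : ∀ p ∈ S.erase s, ∀ q ∈ S.erase s, p ≠ q → det3 s p q ≠ 0 := fun p hp q hq hpq =>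
    GenPos.det3_ne_zero hS hs (Finset.mem_of_mem_erase hp) (Finset.mem_of_mem_erase hq)
      (Finset.ne_of_mem_erase hp).symm (Finset.ne_of_mem_erase hq).symm hpq
  have hcS : c ∈ S.erase s := Finset.mem_erase.2 ⟨hcs, hc⟩
  have hTS : ∀ {p}, p ∈ T → p ∈ S.erase s := Finset.mem_of_mem_erase
  have hT : T.Nonempty := Finset.card_pos.1 <| by
    rw [Finset.card_erase_of_mem hcS, Finset.card_erase_of_mem hs]; omega
  have hκc : κ c = 2 * π := ccwAngle_self he
  have hκT : ∀ w ∈ T, κ w < 2 * π := fun w hw => ccwAngle_lt_two_pi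
    (hgen c hcS w (hTS hw) (Finset.ne_of_mem_erase hw).symm)
  obtain ⟨L, hLT, hLsorted⟩ := exists_list_pairwise_lt T κ fun p hp q hq h => by
    by_contra hpq
    exact hgen p (hTS hp) q (hTS hq) hpq (cross_eq_zero_of_ccwAngle_eq he h)
  have hLc : (L ++ [c]).toFinset = S.erase s := by
    rw [List.toFinset_append, hLT, List.toFinset_cons, List.toFinset_nil, insert_empty_eq,
      Finset.union_singleton, Finset.insert_erase hcS]
  have hmem : ∀ {p}, p ∈ L ++ [c] ↔ p ∈ S.erase s := by
    intro p; rw [← List.mem_toFinset, hLc]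
  have hsorted : (L ++ [c]).Pairwise fun p q => κ p < κ q := by
    refine List.pairwise_append.2 ⟨hLsorted, List.pairwise_singleton _ _, ?_⟩
    intro w hw c' hc'
    rw [List.mem_singleton.1 hc', hκc]
    exact hκT w (hLT ▸ List.mem_toFinset.2 hw)
  have hsL : s ∉ L ++ [c] := fun h => by simpa using hmem.1 h
  have hturn : ∀ x y, (x, y) ∈ edgeList (L ++ [c]) → 0 < det3 s x y := fun x y hxy =>
    det3_pos_of_mem_convexHull he hsL hsorted
      (fun p hp q hq => hgen p (hmem.1 hp) q (hmem.1 hq)) (hLc ▸ hint) hxy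
  have hplane := planePath_cons_of_sorted he hsL hsorted hturn
  rw [hLc, Finset.insert_erase hs] at hplane
  refine ⟨s :: (L ++ [c]), hplane, rfl, by rw [← List.cons_append, List.getLast?_concat],
    fun x hx => ?_⟩
  have hhead : (L ++ [c]).head? ≠ some c := by
    cases L with
    | nil => rw [← hLT] at hT; simp at hT
    | cons a L =>
      have ha : a ∈ T := hLT ▸ List.mem_toFinset.2 (List.mem_cons_self ..)
      simpa using Finset.ne_of_mem_erase ha
  obtain ⟨hxL, hxmax⟩ := rel_of_isEdgeOf_cons_of_max hsorted
    (fun w _ => (hκc ▸ (ccwAngle_pos_le_two_pi _ _).2 : κ w ≤ κ c).not_gt) hsL (by simp) hhead hx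
  exact ⟨fun h => hsL (h ▸ hxL),
    fun w hw hws hwc hwx => hxmax w (hmem.2 (Finset.mem_erase.2 ⟨hws, hw⟩)) hwx hwc⟩

lemma exists_planePath_between {S : Finset Pt} {a b : Pt} (hS : GenPos S) (ha : a ∈ S)
    (hb : b ∈ S) (hab : a ≠ b) (hcard : 3 ≤ S.card) :
    ∃ l : List Pt, PlanePath S l ∧ l.head? = some a ∧ l.getLast? = some b ∧ ¬ IsEdgeOf a b l := by
  by_cases hint : a ∈ convexHull ℝ ((S.erase a : Finset Pt) : Set Pt)
  · obtain ⟨l, hl, hhead, hlast, hnb⟩ := exists_fan hS ha hb hab.symm hcard hint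
    exact ⟨l, hl, hhead, hlast, fun h => (hnb a h).1 rfl⟩
  · obtain ⟨l, hl, hhead, hlast, hne⟩ := exists_planePath_from_corner S hS
      (isCorner_of_notMem_convexHull ha hint) hb hab.symm
    exact ⟨l, hl, hhead, hlast, hne (by omega)⟩

/-- If `s` is inside the convex hull, the fan ending at `a` works unless `b` comes last before `a`
around `s`, and the fan ending at `b` works unless `a` comes last before `b`; both cannot
happen once there is a fourth point. -/
lemma exists_planePath_of_mem_convexHull {S : Finset Pt} {a b s : Pt} (hS : GenPos S)
    (hcard : 4 ≤ S.card) (ha : a ∈ S) (hb : b ∈ S) (hs : s ∈ S) (hab : a ≠ b) (hsa : s ≠ a)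
    (hsb : s ≠ b) (hint : s ∈ convexHull ℝ ((S.erase s : Finset Pt) : Set Pt)) :
    ∃ l : List Pt, PlanePath S l ∧ l.head? = some s ∧
      (l.getLast? = some a ∨ l.getLast? = some b) ∧ ¬ IsEdgeOf a b l := by
  obtain ⟨l₁, hl₁, hhead₁, hlast₁, hnb₁⟩ := exists_fan hS hs ha hsa.symm (by omega) hint
  by_cases h₁ : IsEdgeOf a b l₁
  swap; · exact ⟨l₁, hl₁, hhead₁, .inl hlast₁, h₁⟩
  obtain ⟨l₂, hl₂, hhead₂, hlast₂, hnb₂⟩ := exists_fan hS hs hb hsb.symm (by omega) hint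
  by_cases h₂ : IsEdgeOf a b l₂
  swap; · exact ⟨l₂, hl₂, hhead₂, .inr hlast₂, h₂⟩
  obtain ⟨w, hw, hwsab⟩ := Finset.exists_mem_notMem_of_card_lt_card
    (Finset.card_le_three.trans_lt (by omega : 3 < S.card)) (s := {s, a, b})
  simp only [Finset.mem_insert, Finset.mem_singleton, not_or] at hwsab
  obtain ⟨hws, hwa, hwb⟩ := hwsab
  have hgen : ∀ {p q}, p ∈ S → q ∈ S → p ≠ s → q ≠ s → p ≠ q → cross (p - s) (q - s) ≠ 0 :=
    fun hp hq hps hqs hpq => GenPos.det3_ne_zero hS hs hp hq hps.symm hqs.symm hpq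
  have k₁ := (hnb₁ b (isEdgeOf_comm.1 h₁)).2 w hw hws hwa hwb
  have k₂ := (hnb₂ a h₂).2 w hw hws hwb hwa
  have := ccwAngle_lt_ccwAngle_of_lt (sub_ne_zero.2 hsa.symm) (sub_ne_zero.2 hsb.symm)
    (hgen ha hw hsa.symm hws (Ne.symm hwa)) (hgen ha hb hsa.symm hsb.symm hab)
    (hgen hw hb hws hsb.symm hwb) k₁
  linarith

lemma exists_planePath_cons_of_isHullEdge {S : Finset Pt} {a b s u : Pt} (hsa : s ≠ a)
    (hsb : s ≠ b) (hu : IsHullEdge S s u)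
    (h : ∃ l : List Pt, PlanePath (S.erase s) l ∧ l.head? = some u ∧
      (l.getLast? = some a ∨ l.getLast? = some b) ∧ ¬ IsEdgeOf a b l) :
    ∃ l : List Pt, PlanePath S l ∧ l.head? = some s ∧
      (l.getLast? = some a ∨ l.getLast? = some b) ∧ ¬ IsEdgeOf a b l := by
  obtain ⟨l, hl, hhead, hlast, hne⟩ := h
  refine ⟨s :: l, planePath_cons_of_isHullEdge hl hhead hu, rfl, ?_,
    fun h => hne (isEdgeOf_of_isEdgeOf_cons hsa.symm hsb.symm h)⟩
  rcases hlast with h | h <;> simp [List.getLast?_cons, h]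

/-- Peeling a corner `s`: continue from a neighbour of `s` on the convex hull, which is `a` or `b`
if possible, and otherwise leaves at least four points. -/
lemma exists_planePath_of_isCorner {S : Finset Pt} {a b s : Pt} (hS : GenPos S)
    (hcard : 4 ≤ S.card) (ha : a ∈ S) (hb : b ∈ S) (hab : a ≠ b) (hsa : s ≠ a) (hsb : s ≠ b)
    (hs : IsCorner S s)
    (ih : 4 ≤ (S.erase s).card → ∀ u ∈ S.erase s, ∃ l : List Pt, PlanePath (S.erase s) l ∧
      l.head? = some u ∧ (l.getLast? = some a ∨ l.getLast? = some b) ∧ ¬ IsEdgeOf a b l) :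
    ∃ l : List Pt, PlanePath S l ∧ l.head? = some s ∧
      (l.getLast? = some a ∨ l.getLast? = some b) ∧ ¬ IsEdgeOf a b l := by
  have hS' : GenPos (S.erase s) := GenPos.subset hS (Finset.erase_subset s S)
  have ha' : a ∈ S.erase s := Finset.mem_erase.2 ⟨hsa.symm, ha⟩
  have hb' : b ∈ S.erase s := Finset.mem_erase.2 ⟨hsb.symm, hb⟩
  have hcard' : (S.erase s).card = S.card - 1 := Finset.card_erase_of_mem hs.1
  have hmem : ∀ {u}, IsHullEdge S s u → u ∈ S.erase s := fun hu =>
    Finset.mem_erase.2 ⟨hu.2.2.1.symm, hu.2.1⟩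
  obtain ⟨u₁, u₂, hu₁₂, hu₁, hu₂⟩ := exists_isHullEdge_of_isCorner hS hs (by omega)
  have hend : ∀ u, IsHullEdge S s u → u = a ∨ u = b → ∃ l : List Pt, PlanePath S l ∧
      l.head? = some s ∧ (l.getLast? = some a ∨ l.getLast? = some b) ∧ ¬ IsEdgeOf a b l := by
    rintro u hu (rfl | rfl)
    · obtain ⟨l, hl, hhead, hlast, hne⟩ := exists_planePath_between hS' ha' hb' hab (by omega)
      exact exists_planePath_cons_of_isHullEdge hsa hsb hu ⟨l, hl, hhead, .inr hlast, hne⟩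
    · obtain ⟨l, hl, hhead, hlast, hne⟩ :=
        exists_planePath_between hS' hb' ha' hab.symm (by omega)
      exact exists_planePath_cons_of_isHullEdge hsa hsb hu
        ⟨l, hl, hhead, .inl hlast, fun h => hne (isEdgeOf_comm.1 h)⟩
  by_cases h₁ : u₁ = a ∨ u₁ = b
  · exact hend u₁ hu₁ h₁
  by_cases h₂ : u₂ = a ∨ u₂ = b
  · exact hend u₂ hu₂ h₂
  simp only [not_or] at h₁ h₂
  have hfour : ({a, b, u₁, u₂} : Finset Pt).card = 4 := by
    rw [Finset.card_insert_of_notMem (by simp [hab, Ne.symm h₁.1, Ne.symm h₂.1]),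
      Finset.card_insert_of_notMem (by simp [Ne.symm h₁.2, Ne.symm h₂.2]), Finset.card_pair hu₁₂]
  have hsub : ({a, b, u₁, u₂} : Finset Pt) ⊆ S.erase s := by
    simp only [Finset.insert_subset_iff, Finset.singleton_subset_iff]
    exact ⟨ha', hb', hmem hu₁, hmem hu₂⟩
  exact exists_planePath_cons_of_isHullEdge hsa hsb hu₁
    (ih (hfour ▸ Finset.card_le_card hsub) u₁ (hmem hu₁))

end HamPath

/-- On a set of at least 4 points in general position, for distinct
`a, b ∈ S` and any `s ∈ S`, there is a plane Hamiltonian path with one endpoint `s`,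
the other endpoint `a` or `b`, avoiding the segment `ab`. -/
theorem stmt_3 (S : Finset Pt) (hcard : 4 ≤ S.card) (hgp : GenPos S)
    (a b : Pt) (ha : a ∈ S) (hb : b ∈ S) (hab : a ≠ b)
    (s : Pt) (hs : s ∈ S) :
    ∃ l : List Pt, PlanePath S l ∧ l.head? = some s ∧
      (l.getLast? = some a ∨ l.getLast? = some b) ∧ ¬ IsEdgeOf a b l := by
  induction S using Finset.strongInduction generalizing s with
  | H S ih =>
  by_cases hsa : s = a
  · subst hsa
    obtain ⟨l, hl, hhead, hlast, hne⟩ := HamPath.exists_planePath_between hgp hs hb hab (by omega)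
    exact ⟨l, hl, hhead, .inr hlast, hne⟩
  by_cases hsb : s = b
  · subst hsb
    obtain ⟨l, hl, hhead, hlast, hne⟩ :=
      HamPath.exists_planePath_between hgp hs ha hab.symm (by omega)
    exact ⟨l, hl, hhead, .inl hlast, fun h => hne (HamPath.isEdgeOf_comm.1 h)⟩
  by_cases hint : s ∈ convexHull ℝ ((S.erase s : Finset Pt) : Set Pt)
  · exact HamPath.exists_planePath_of_mem_convexHull hgp hcard ha hb hs hab hsa hsb hint
  · exact HamPath.exists_planePath_of_isCorner hgp hcard ha hb hab hsa hsb
      (HamPath.isCorner_of_notMem_convexHull hs hint) fun hcard' u hu =>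
        ih (S.erase s) (Finset.erase_ssubset hs) hcard'
          (HamPath.GenPos.subset hgp (Finset.erase_subset s S))
          (Finset.mem_erase.2 ⟨hsa ∘ Eq.symm, ha⟩)
          (Finset.mem_erase.2 ⟨hsb ∘ Eq.symm, hb⟩) u hu
end
end

section
/- Let S be a set of points in general position in the plane and let a, b ∈ S be distinct. Suppose that not both a and b are on the boundary of the convex hull of S, that one of s, t equals a or b, that the open halfplane determined by the line ℓ(ab) containing the other of s, t contains at least one more point of S, and that every segment between two points of S that crosses the line ℓ(ab) but not the segment ab is incident to the other of s, t. Then there is no plane Hamiltonian path on S with endpoints s and t that contains the segment ab as an edge. -/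
open Set
open scoped Classical

noncomputable section

/-!
Reversing the path and swapping `a` and `b`, we may assume the path is `a, b, v₁, …, vₖ, t`.
If `S \ {a, b}` lay in one open halfplane of `ℓ(ab)`, a supporting line argument would make both
`a` and `b` hull vertices; so besides the point `p` on the side of `t` there is a point `q` on the
other side, and both are among the `vᵢ`. An edge `vᵢvᵢ₊₁` crossing `ℓ(ab)` would either cross the
edge `ab` of the path or be a bridge not incident to `t`, so all `vᵢ` lie on one side of `ℓ(ab)`:
a contradiction.
-/

section Supporting

variable {E : Type*} [AddCommGroup E] [Module ℝ E] {s : Set E} {φ : E →ₗ[ℝ] ℝ} {c : ℝ}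

theorem convexHull_subset_of_le (h : ∀ z ∈ s, c ≤ φ z) :
    convexHull ℝ s ⊆ {z | c ≤ φ z ∧ (φ z = c → z ∈ convexHull ℝ {z ∈ s | φ z = c})} := by
  refine convexHull_min (fun z hz => ⟨h z hz, fun hzc => subset_convexHull ℝ _ ⟨hz, hzc⟩⟩) ?_
  rintro x ⟨hx, hxc⟩ y ⟨hy, hyc⟩ θ₁ θ₂ h₁ h₂ h₁₂
  have hφ : φ (θ₁ • x + θ₂ • y) - c = θ₁ * (φ x - c) + θ₂ * (φ y - c) := by
    simp only [map_add, map_smul, smul_eq_mul]; linear_combination c * h₁₂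
  have hx₀ := mul_nonneg h₁ (sub_nonneg.2 hx)
  have hy₀ := mul_nonneg h₂ (sub_nonneg.2 hy)
  refine ⟨by linarith, fun hz => ?_⟩
  rcases h₁.eq_or_lt with rfl | h₁
  · obtain rfl : θ₂ = 1 := by linarith
    simpa using hyc (by simpa using hz)
  rcases h₂.eq_or_lt with rfl | h₂
  · obtain rfl : θ₁ = 1 := by linarith
    simpa using hxc (by simpa using hz)
  have hx' : φ x = c := by nlinarith
  have hy' : φ y = c := by nlinarith
  exact convex_convexHull ℝ _ (hxc hx') (hyc hy') h₁.le h₂.le h₁₂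

theorem isExtreme_convexHull_of_le (h : ∀ z ∈ s, c ≤ φ z) :
    IsExtreme ℝ (convexHull ℝ s) (convexHull ℝ {z ∈ s | φ z = c}) := by
  refine ⟨convexHull_mono (sep_subset _ _), fun x₁ hx₁ x₂ hx₂ x hx hseg => ?_⟩
  have hxc : φ x = c :=
    convexHull_min (fun z hz => hz.2) (convex_hyperplane φ.isLinear c) hx
  obtain ⟨hx₁c, hx₁⟩ := convexHull_subset_of_le h hx₁
  obtain ⟨hx₂c, -⟩ := convexHull_subset_of_le h hx₂
  obtain ⟨θ₁, θ₂, h₁, h₂, h₁₂, rfl⟩ := hseg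
  simp only [map_add, map_smul, smul_eq_mul] at hxc
  have hsum : θ₁ * (φ x₁ - c) + θ₂ * (φ x₂ - c) = 0 := by linear_combination hxc - c * h₁₂
  have h0 : θ₁ * (φ x₁ - c) = 0 := by
    linarith [mul_nonneg h₁.le (sub_nonneg.2 hx₁c), mul_nonneg h₂.le (sub_nonneg.2 hx₂c)]
  exact hx₁ (sub_eq_zero.1 ((mul_eq_zero.1 h0).resolve_left h₁.ne'))

theorem left_mem_extremePoints_convexHull_pair (a b : E) :
    a ∈ (convexHull ℝ {a, b}).extremePoints ℝ := by
  rcases eq_or_ne a b with rfl | hab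
  · simp
  obtain ⟨ψ, hψ⟩ : ∃ ψ : Module.Dual ℝ E, ψ (b - a) ≠ 0 := by
    by_contra! h
    exact hab (sub_eq_zero.1 ((Module.forall_dual_apply_eq_zero_iff ℝ _).1 h)).symm
  set φ := (ψ (b - a))⁻¹ • ψ
  have hφ : φ b = φ a + 1 := by
    have : φ (b - a) = 1 := inv_mul_cancel₀ hψ
    rw [map_sub] at this; linarith
  have hface : {z ∈ ({a, b} : Set E) | φ z = φ a} = {a} := by
    ext z; constructor
    · rintro ⟨rfl | rfl, hz⟩
      · rfl
      · linarith
    · rintro rfl; exact ⟨Or.inl rfl, rfl⟩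
  have := isExtreme_convexHull_of_le (s := {a, b}) (φ := φ) (c := φ a) (by
    rintro z (rfl | rfl) <;> linarith)
  rwa [hface, convexHull_singleton, isExtreme_singleton] at this

theorem mem_extremePoints_convexHull_of_le {a b : E} (ha : a ∈ s) (h : ∀ z ∈ s, φ a ≤ φ z)
    (hface : ∀ z ∈ s, φ z = φ a → z = a ∨ z = b) : a ∈ (convexHull ℝ s).extremePoints ℝ := by
  have hsub : convexHull ℝ {z ∈ s | φ z = φ a} ⊆ convexHull ℝ {a, b} :=
    convexHull_mono fun z hz => hface z hz.1 hz.2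
  exact (isExtreme_convexHull_of_le h).extremePoints_subset_extremePoints
    (inter_extremePoints_subset_extremePoints_of_subset hsub
      ⟨subset_convexHull ℝ _ ⟨ha, rfl⟩, left_mem_extremePoints_convexHull_pair a b⟩)

end Supporting

def det3Form (a b : Pt) : Pt →ₗ[ℝ] ℝ :=
  (b.1 - a.1) • LinearMap.snd ℝ ℝ ℝ - (b.2 - a.2) • LinearMap.fst ℝ ℝ ℝ

theorem det3_eq_det3Form_sub (a b z : Pt) : det3 a b z = det3Form a b z - det3Form a b a := by
  simp only [det3, det3Form, LinearMap.sub_apply, LinearMap.smul_apply, LinearMap.snd_apply,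
    LinearMap.fst_apply, smul_eq_mul]
  ring

@[simp] theorem det3_left (a b : Pt) : det3 a b a = 0 := by simp only [det3]; ring

@[simp] theorem det3_right (a b : Pt) : det3 a b b = 0 := by simp only [det3]; ring

theorem det3_swap (a b z : Pt) : det3 b a z = -det3 a b z := by simp only [det3]; ring

theorem collinear_of_det3_eq_zero_s5 {a b z : Pt} (h : det3 a b z = 0) :
    Collinear ℝ ({a, b, z} : Set Pt) := by
  rcases eq_or_ne a b with rfl | hab
  · simpa using collinear_pair ℝ a z
  have hn : (b.1 - a.1) ^ 2 + (b.2 - a.2) ^ 2 ≠ 0 := by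
    contrapose! hab
    ext <;> nlinarith [sq_nonneg (b.1 - a.1), sq_nonneg (b.2 - a.2)]
  rw [insert_comm, pair_comm, insert_comm, pair_comm b]
  apply collinear_insert_of_mem_affineSpan_pair
  -- `r` is the parameter of the orthogonal projection of `z` onto `ℓ(ab)`
  set r := ((z.1 - a.1) * (b.1 - a.1) + (z.2 - a.2) * (b.2 - a.2)) /
    ((b.1 - a.1) ^ 2 + (b.2 - a.2) ^ 2)
  convert AffineMap.lineMap_mem_affineSpan_pair r a b using 1
  simp only [det3] at h
  ext
  · simp only [AffineMap.lineMap_apply_module, Prod.fst_add, Prod.smul_fst, smul_eq_mul, r]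
    field_simp
    linear_combination -(b.2 - a.2) * h
  · simp only [AffineMap.lineMap_apply_module, Prod.snd_add, Prod.smul_snd, smul_eq_mul, r]
    field_simp
    linear_combination (b.1 - a.1) * h

theorem GenPos.det3_ne_zero {S : Finset Pt} (hgp : GenPos S) {a b z : Pt} (ha : a ∈ S)
    (hb : b ∈ S) (hz : z ∈ S) (hab : a ≠ b) (hza : z ≠ a) (hzb : z ≠ b) : det3 a b z ≠ 0 :=
  fun h => hgp a ha b hb z hz hab hza.symm hzb.symm (collinear_of_det3_eq_zero_s5 h)

theorem GenPos.hullVertex_of_halfplane {S : Finset Pt} (hgp : GenPos S) {a b : Pt} (ha : a ∈ S)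
    (hb : b ∈ S) (hab : a ≠ b) {σ : ℝ} (hσ : σ ≠ 0) (hside : ∀ z ∈ S, 0 ≤ σ * det3 a b z) :
    HullVertex S a ∧ HullVertex S b := by
  set φ := σ • det3Form a b
  have hφ : ∀ z, φ z - φ a = σ * det3 a b z := fun z => by
    simp only [φ, LinearMap.smul_apply, smul_eq_mul, det3_eq_det3Form_sub]; ring
  have hφb : φ b = φ a := by simpa [sub_eq_zero] using hφ b
  have hmin : ∀ z ∈ (S : Set Pt), φ a ≤ φ z := fun z hz => by linarith [hφ z, hside z hz]
  have hface : ∀ z ∈ (S : Set Pt), φ z = φ a → z = a ∨ z = b := by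
    intro z hz hza
    by_contra! hne
    have : σ * det3 a b z = 0 := by rw [← hφ, hza, sub_self]
    exact hgp.det3_ne_zero ha hb hz hab hne.1 hne.2 ((mul_eq_zero.1 this).resolve_left hσ)
  exact ⟨mem_extremePoints_convexHull_of_le ha hmin hface,
    mem_extremePoints_convexHull_of_le hb (hφb ▸ hmin)
      (fun z hz h => (hface z hz (h.trans hφb)).symm)⟩

theorem GenPos.exists_det3_mul_neg {S : Finset Pt} (hgp : GenPos S) {a b t : Pt} (ha : a ∈ S)
    (hb : b ∈ S) (hab : a ≠ b) (hnothull : ¬ (HullVertex S a ∧ HullVertex S b))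
    (ht : det3 a b t ≠ 0) : ∃ q ∈ S, det3 a b q * det3 a b t < 0 := by
  by_contra! h
  exact hnothull <| hgp.hullVertex_of_halfplane ha hb hab ht fun z hz => by
    linarith [h z hz, mul_comm (det3 a b z) (det3 a b t)]

theorem IsBridge.swap {a b x y : Pt} (h : IsBridge a b x y) : IsBridge b a x y := by
  obtain ⟨hcross, hdisj⟩ := h
  refine ⟨?_, by rwa [segment_symm ℝ b a]⟩
  rwa [det3_swap a b x, det3_swap a b y, neg_mul_neg]

theorem mem_edgeList_iff {x y : Pt} {l : List Pt} :
    (x, y) ∈ edgeList l ↔ ∃ u v, l = u ++ x :: y :: v := by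
  induction l with
  | nil => simp [edgeList]
  | cons c l ih =>
    cases l with
    | nil => simp [edgeList, List.cons_eq_append_iff]
    | cons d l =>
      simp only [edgeList, List.tail_cons, List.zip_cons_cons, List.mem_cons] at ih ⊢
      rw [ih]
      constructor
      · rintro (h | ⟨u, v, h⟩)
        · obtain ⟨rfl, rfl⟩ := Prod.ext_iff.1 h
          exact ⟨[], l, rfl⟩
        · exact ⟨c :: u, v, by rw [h, List.cons_append]⟩
      · rintro ⟨_ | ⟨e, u⟩, v, h⟩
        · obtain ⟨rfl, rfl, -⟩ := List.cons_eq_cons.1 h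
          exact Or.inl rfl
        · exact Or.inr ⟨u, v, (List.cons_eq_cons.1 h).2⟩

theorem mem_edgeList_reverse_iff {x y : Pt} {l : List Pt} :
    (x, y) ∈ edgeList l.reverse ↔ (y, x) ∈ edgeList l := by
  simp only [mem_edgeList_iff]
  constructor
  · rintro ⟨u, v, h⟩
    exact ⟨v.reverse, u.reverse, by rw [List.reverse_eq_iff.1 h]; simp⟩
  · rintro ⟨u, v, rfl⟩
    exact ⟨v.reverse, u.reverse, by simp⟩

theorem IsEdgeOf.reverse {a b : Pt} {l : List Pt} (h : IsEdgeOf a b l) :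
    IsEdgeOf a b l.reverse := by
  simpa only [IsEdgeOf, mem_edgeList_reverse_iff, or_comm] using h

theorem PlanePath.reverse {S : Finset Pt} {l : List Pt} (h : PlanePath S l) :
    PlanePath S l.reverse := by
  obtain ⟨hnd, hS, hplane⟩ := h
  refine ⟨List.nodup_reverse.2 hnd, by rwa [List.toFinset_reverse], ?_⟩
  rintro ⟨e₁, e₂⟩ he ⟨f₁, f₂⟩ hf hef
  rw [mem_edgeList_reverse_iff] at he hf
  have := hplane _ he _ hf (by simpa [and_comm] using hef)
  simpa only [segment_symm ℝ e₂, segment_symm ℝ f₂, pair_comm e₂, pair_comm f₂] using this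

theorem eq_cons_cons_of_isEdgeOf {a b : Pt} {l : List Pt} (hnd : l.Nodup) (hh : l.head? = some a)
    (he : IsEdgeOf a b l) : ∃ m, l = a :: b :: m := by
  obtain ⟨m, rfl⟩ : ∃ m, l = a :: m := List.head?_eq_some_iff.1 hh
  have ha : a ∉ m := (List.nodup_cons.1 hnd).1
  rcases he with he | he <;> obtain ⟨_ | ⟨c, u⟩, v, h⟩ := mem_edgeList_iff.1 he
  · exact ⟨v, by rw [h]; rfl⟩
  all_goals exact (ha (by simp [(List.cons_eq_cons.1 h).2])).elim

theorem PlanePath.segment_inter_eq_empty {S : Finset Pt} {l : List Pt} (h : PlanePath S l)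
    {a b x y : Pt} (hab : (a, b) ∈ edgeList l) (hxy : (x, y) ∈ edgeList l)
    (hx : x ∉ ({a, b} : Set Pt)) (hy : y ∉ ({a, b} : Set Pt)) :
    segment ℝ x y ∩ segment ℝ a b = ∅ := by
  refine eq_empty_of_forall_notMem fun z hz => ?_
  obtain ⟨rfl | rfl, hzab⟩ := h.2.2 _ hxy _ hab (by rintro ⟨⟩; exact hx (Or.inl rfl)) hz
  exacts [hx hzab, hy hzab]

theorem List.IsChain.eq_of_mem {α β : Type*} {f : α → β} {l : List α}
    (h : l.IsChain fun x y => f x = f y) {x y : α} (hx : x ∈ l) (hy : y ∈ l) : f x = f y := by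
  have : Std.Symm fun x y : α => f x = f y := ⟨fun _ _ => Eq.symm⟩
  rcases eq_or_ne x y with rfl | hxy
  · rfl
  · exact (List.pairwise_map.1 (List.isChain_iff_pairwise.1 ((List.isChain_map f).2 h))).forall
      hx hy hxy

theorem exists_eq_cons_cons_append {a b t : Pt} {l : List Pt} (hnd : l.Nodup)
    (hh : l.head? = some a) (hl : l.getLast? = some t) (he : IsEdgeOf a b l) (hbt : b ≠ t) :
    ∃ r, l = a :: b :: (r ++ [t]) := by
  obtain ⟨m, rfl⟩ := eq_cons_cons_of_isEdgeOf hnd hh he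
  rcases List.eq_nil_or_concat m with rfl | ⟨r, t', rfl⟩
  · simp only [List.getLast?_cons_cons, List.getLast?_singleton, Option.some.injEq] at hl
    exact absurd hl hbt
  · rw [List.concat_eq_append, ← List.cons_append, ← List.cons_append, List.getLast?_concat,
      Option.some.injEq] at hl
    exact ⟨r, by rw [hl, List.concat_eq_append]⟩

theorem PlanePath.mem_middle_iff {S : Finset Pt} {a b t z : Pt} {r : List Pt}
    (hpp : PlanePath S (a :: b :: (r ++ [t]))) : z ∈ r ↔ z ∈ S ∧ z ∉ ({a, b, t} : Set Pt) := by
  obtain ⟨hna, hnb, hndr⟩ : a ∉ b :: (r ++ [t]) ∧ b ∉ r ++ [t] ∧ (r ++ [t]).Nodup := by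
    simpa only [List.nodup_cons] using hpp.1
  rw [← hpp.2.1]
  simp only [List.mem_toFinset, List.mem_cons, List.mem_append, List.not_mem_nil, or_false,
    mem_insert_iff, mem_singleton_iff]
  constructor
  · intro hz
    refine ⟨Or.inr (Or.inr (Or.inl hz)), ?_⟩
    rintro (rfl | rfl | rfl)
    · exact hna (by simp [hz])
    · exact hnb (by simp [hz])
    · exact List.disjoint_of_nodup_append hndr hz (List.mem_singleton_self _)
  · tauto

/-- An edge crossing `ℓ(ab)` would cross the edge `ab` or be a bridge not incident to `t`. -/
theorem sign_det3_eq_of_mem_edgeList {S : Finset Pt} (hgp : GenPos S) {a b t x y : Pt}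
    (ha : a ∈ S) (hb : b ∈ S) (hab : a ≠ b)
    (hbr : ∀ x ∈ S, ∀ y ∈ S, IsBridge a b x y → x = t ∨ y = t) {l : List Pt}
    (hpp : PlanePath S l) (habl : (a, b) ∈ edgeList l) (hxy : (x, y) ∈ edgeList l)
    (hxS : x ∈ S) (hyS : y ∈ S) (hx : x ∉ ({a, b, t} : Set Pt)) (hy : y ∉ ({a, b, t} : Set Pt)) :
    SignType.sign (det3 a b x) = SignType.sign (det3 a b y) := by
  simp only [mem_insert_iff, mem_singleton_iff, not_or] at hx hy
  have hcross : ¬ det3 a b x * det3 a b y < 0 := fun hcross => by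
    have hdisj := hpp.segment_inter_eq_empty habl hxy (by simp [hx.1, hx.2.1])
      (by simp [hy.1, hy.2.1])
    rcases hbr x hxS y hyS ⟨hcross, hdisj⟩ with rfl | rfl
    exacts [hx.2.2 rfl, hy.2.2 rfl]
  rcases (hgp.det3_ne_zero ha hb hxS hab hx.1 hx.2.1).lt_or_gt with hx0 | hx0 <;>
    rcases (hgp.det3_ne_zero ha hb hyS hab hy.1 hy.2.1).lt_or_gt with hy0 | hy0
  · rw [sign_neg hx0, sign_neg hy0]
  · exact absurd (mul_neg_of_neg_of_pos hx0 hy0) hcross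
  · exact absurd (mul_neg_of_pos_of_neg hx0 hy0) hcross
  · rw [sign_pos hx0, sign_pos hy0]

theorem sign_det3_eq_of_mem_middle {S : Finset Pt} (hgp : GenPos S) {a b t : Pt} (ha : a ∈ S)
    (hb : b ∈ S) (hab : a ≠ b) (hbr : ∀ x ∈ S, ∀ y ∈ S, IsBridge a b x y → x = t ∨ y = t)
    {r : List Pt} (hpp : PlanePath S (a :: b :: (r ++ [t]))) {x y : Pt} (hx : x ∈ r)
    (hy : y ∈ r) : SignType.sign (det3 a b x) = SignType.sign (det3 a b y) := by
  refine List.IsChain.eq_of_mem (f := fun z => SignType.sign (det3 a b z))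
    (List.isChain_iff_forall_rel_of_append_cons_cons.2 fun x y u v huv => ?_) hx hy
  obtain ⟨hxS, hx⟩ := hpp.mem_middle_iff.1 (by simp [huv] : x ∈ r)
  obtain ⟨hyS, hy⟩ := hpp.mem_middle_iff.1 (by simp [huv] : y ∈ r)
  exact sign_det3_eq_of_mem_edgeList hgp ha hb hab hbr hpp (mem_edgeList_iff.2 ⟨[], _, rfl⟩)
    (mem_edgeList_iff.2 ⟨a :: b :: u, v ++ [t], by simp [huv]⟩) hxS hyS hx hy

theorem not_planePath_of_head_eq {S : Finset Pt} (hgp : GenPos S) {a b t : Pt} (ha : a ∈ S)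
    (hb : b ∈ S) (hab : a ≠ b) (hnothull : ¬ (HullVertex S a ∧ HullVertex S b))
    (hp : ∃ p ∈ S, p ≠ t ∧ 0 < det3 a b p * det3 a b t)
    (hbr : ∀ x ∈ S, ∀ y ∈ S, IsBridge a b x y → x = t ∨ y = t) {l : List Pt}
    (hpp : PlanePath S l) (hh : l.head? = some a) (hl : l.getLast? = some t)
    (he : IsEdgeOf a b l) : False := by
  obtain ⟨p, hpS, hpt, hpside⟩ := hp
  have ht0 : det3 a b t ≠ 0 := fun h => by simp [h] at hpside
  obtain ⟨q, hqS, hqside⟩ := hgp.exists_det3_mul_neg ha hb hab hnothull ht0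
  obtain ⟨r, rfl⟩ := exists_eq_cons_cons_append hpp.1 hh hl he (by rintro rfl; simp at ht0)
  have hmem : ∀ z ∈ S, det3 a b z ≠ 0 → z ≠ t → z ∈ r := fun z hz hz0 hzt =>
    hpp.mem_middle_iff.2 ⟨hz, by rintro (rfl | rfl | rfl) <;> simp_all⟩
  have hpq := sign_det3_eq_of_mem_middle hgp ha hb hab hbr hpp
    (hmem p hpS (by rintro h; simp [h] at hpside) hpt)
    (hmem q hqS (by rintro h; simp [h] at hqside) (by rintro rfl; nlinarith [mul_self_pos.2 ht0]))
  have h₁ := sign_pos hpside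
  have h₂ := sign_neg hqside
  rw [sign_mul, hpq] at h₁
  rw [sign_mul, h₁] at h₂
  exact absurd h₂ (by decide)

theorem not_planePath_of_head_mem {S : Finset Pt} (hgp : GenPos S) {a b s t : Pt} (ha : a ∈ S)
    (hb : b ∈ S) (hab : a ≠ b) (hnothull : ¬ (HullVertex S a ∧ HullVertex S b))
    (hs : s ∈ ({a, b} : Set Pt)) (hp : ∃ p ∈ S, p ≠ t ∧ 0 < det3 a b p * det3 a b t)
    (hbr : ∀ x ∈ S, ∀ y ∈ S, IsBridge a b x y → x = t ∨ y = t) {l : List Pt}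
    (hpp : PlanePath S l) (hh : l.head? = some s) (hl : l.getLast? = some t)
    (he : IsEdgeOf a b l) : False := by
  rcases hs with rfl | rfl
  · exact not_planePath_of_head_eq hgp ha hb hab hnothull hp hbr hpp hh hl he
  · refine not_planePath_of_head_eq hgp hb ha hab.symm (fun h => hnothull h.symm) ?_
      (fun x hx y hy h => hbr x hx y hy h.swap) hpp hh hl he.symm
    simpa only [det3_swap a s, neg_mul_neg] using hp

theorem stmt_5_general (S : Finset Pt) (hgp : GenPos S)
    (a b s t : Pt) (ha : a ∈ S) (hb : b ∈ S) (hab : a ≠ b)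
    (hnothull : ¬ (HullVertex S a ∧ HullVertex S b))
    (hcase :
      (s ∈ ({a, b} : Set Pt) ∧
        (∃ p ∈ S, p ≠ t ∧ 0 < det3 a b p * det3 a b t) ∧
        (∀ x ∈ S, ∀ y ∈ S, IsBridge a b x y → x = t ∨ y = t)) ∨
      (t ∈ ({a, b} : Set Pt) ∧
        (∃ p ∈ S, p ≠ s ∧ 0 < det3 a b p * det3 a b s) ∧
        (∀ x ∈ S, ∀ y ∈ S, IsBridge a b x y → x = s ∨ y = s))) :
    ¬ ∃ l : List Pt, PlanePath S l ∧ l.head? = some s ∧ l.getLast? = some t ∧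
      IsEdgeOf a b l := by
  rintro ⟨l, hpp, hh, hl, he⟩
  rcases hcase with ⟨hs, hp, hbr⟩ | ⟨ht, hp, hbr⟩
  · exact not_planePath_of_head_mem hgp ha hb hab hnothull hs hp hbr hpp hh hl he
  · exact not_planePath_of_head_mem hgp ha hb hab hnothull ht hp hbr hpp.reverse
      (by rwa [List.head?_reverse]) (by rwa [List.getLast?_reverse]) he.reverse

/-- Suppose not both `a, b` are hull vertices, one of `s, t` equals `a` or `b`,
the open halfplane of `ℓ(ab)` containing the other of `s, t` contains at least one more
point of `S`, and every bridge over `ℓ(ab)` between points of `S` is incident to the other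
of `s, t`. Then there is no plane Hamiltonian path with endpoints `s, t` containing `ab`. -/
theorem stmt_5 (S : Finset Pt) (hgp : GenPos S)
    (a b s t : Pt) (ha : a ∈ S) (hb : b ∈ S) (hab : a ≠ b)
    (hs : s ∈ S) (ht : t ∈ S)
    (hnothull : ¬ (HullVertex S a ∧ HullVertex S b))
    (hcase :
      (s ∈ ({a, b} : Set Pt) ∧
        (∃ p ∈ S, p ≠ t ∧ 0 < det3 a b p * det3 a b t) ∧
        (∀ x ∈ S, ∀ y ∈ S, IsBridge a b x y → x = t ∨ y = t)) ∨
      (t ∈ ({a, b} : Set Pt) ∧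
        (∃ p ∈ S, p ≠ s ∧ 0 < det3 a b p * det3 a b s) ∧
        (∀ x ∈ S, ∀ y ∈ S, IsBridge a b x y → x = s ∨ y = s))) :
    ¬ ∃ l : List Pt, PlanePath S l ∧ l.head? = some s ∧ l.getLast? = some t ∧
      IsEdgeOf a b l :=
  stmt_5_general S hgp a b s t ha hb hab hnothull hcase
end
end
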